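/- arXiv:2205.07931 — 11 statements merged into one kernel-verified Lean document; each statement's English description precedes it below -/
import Mathlib

section
/- Suppose (α, β, γ) is a nonnegative integer solution of 4x + 5y + 6z = n, where n ≥ 4 and n ≠ 5. Then the equation 4x + 5y + 6z = n + 6 has a nonnegative integer solution different from (α, β, γ + 1). -/
theorem stmt_3 (n α β γ : ℕ) (hn : 4 ≤ n) (hn5 : n ≠ 5)
    (h : 4 * α + 5 * β + 6 * γ = n) :
    ∃ x y z : ℕ, 4 * x + 5 * y + 6 * z = n + 6 ∧ (x, y, z) ≠ (α, β, γ + 1) := by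
  rcases Nat.eq_zero_or_pos γ with hγ | hγ
  · rcases Nat.eq_zero_or_pos α with hα | hα
    · exact ⟨α + 1, β - 2, 2, by omega, by simp only [ne_eq, Prod.mk.injEq]; omega⟩
    · exact ⟨α - 1, β + 2, 0, by omega, by simp only [ne_eq, Prod.mk.injEq]; omega⟩
  · exact ⟨α + 3, β, γ - 1, by omega, by simp only [ne_eq, Prod.mk.injEq]; omega⟩
end

section
/- Let a and b be coprime positive integers and let n be a positive integer. Then the number of pairs (x, y) of nonnegative integers with ax + by = n equals either ⌊n/(ab)⌋ or ⌊n/(ab)⌋ + 1. -/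
/-!
A solution is determined by `x`, and the admissible `x` are exactly the `x ≤ n / a` in the
residue class of `a⁻¹ n` modulo `b`. Any residue class modulo `b` meets `{0, …, m}` in
`m / b` or `m / b + 1` elements, and here `m / b = n / a / b = n / (a * b)`.
-/

theorem Nat.exists_mul_modEq_of_coprime {a b : ℕ} (hb : 0 < b) (hab : a.Coprime b) (n : ℕ) :
    ∃ r, a * r ≡ n [MOD b] := by
  have : NeZero b := ⟨hb.ne'⟩
  refine ⟨(↑(ZMod.unitOfCoprime a hab)⁻¹ * n : ZMod b).val, ?_⟩
  rw [← ZMod.natCast_eq_natCast_iff, Nat.cast_mul, ZMod.natCast_zmod_val, ← mul_assoc,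
    ← ZMod.coe_unitOfCoprime a hab, Units.mul_inv, one_mul]

theorem Nat.count_modEq_succ_eq_or {b : ℕ} (hb : 0 < b) (m v : ℕ) :
    Nat.count (· ≡ v [MOD b]) (m + 1) = m / b ∨
    Nat.count (· ≡ v [MOD b]) (m + 1) = m / b + 1 := by
  rw [Nat.count_modEq_card _ hb, Nat.succ_div]
  -- When `b ∣ m + 1` the quotient gains one while the remainder term vanishes.
  by_cases hdvd : b ∣ m + 1
  · simp [hdvd, Nat.mod_eq_zero_of_dvd hdvd]
  · split_ifs <;> simp

theorem card_linear_solutions_eq_card_fst {a b n : ℕ} (hb : 0 < b) :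
    Nat.card {p : ℕ × ℕ // a * p.1 + b * p.2 = n} =
      Nat.card {x : ℕ // a * x ≤ n ∧ b ∣ n - a * x} :=
  Nat.card_congr
    { toFun p := ⟨p.1.1, by omega, ⟨p.1.2, by omega⟩⟩
      invFun x := ⟨(x.1, (n - a * x.1) / b), by
        show a * x.1 + b * ((n - a * x.1) / b) = n
        rw [Nat.mul_div_cancel' x.2.2]; omega⟩
      left_inv := by
        rintro ⟨⟨x, y⟩, rfl⟩
        ext
        · rfl
        · show (a * x + b * y - a * x) / b = y
          rw [Nat.add_sub_cancel_left, Nat.mul_div_cancel_left _ hb]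
      right_inv x := rfl }

theorem card_linear_solutions_eq_count {a b n r : ℕ} (ha : 0 < a) (hb : 0 < b)
    (hab : a.Coprime b) (hr : a * r ≡ n [MOD b]) :
    Nat.card {p : ℕ × ℕ // a * p.1 + b * p.2 = n} = Nat.count (· ≡ r [MOD b]) (n / a + 1) := by
  have hiff (x : ℕ) : (a * x ≤ n ∧ b ∣ n - a * x) ↔ (x < n / a + 1 ∧ x ≡ r [MOD b]) := by
    rw [Nat.lt_succ_iff, Nat.le_div_iff_mul_le ha, mul_comm x]
    refine and_congr_right fun hx => ?_
    rw [← Nat.modEq_iff_dvd' hx]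
    exact ⟨fun h => Nat.ModEq.cancel_left_of_coprime hab.symm (h.trans hr.symm),
      fun h => (h.mul_left a).trans hr⟩
  rw [card_linear_solutions_eq_card_fst hb, Nat.count_eq_card_fintype, Fintype.card_eq_nat_card,
    Nat.card_congr (Equiv.subtypeEquivRight hiff)]

theorem stmt_4_general (a b n : ℕ) (ha : 0 < a) (hb : 0 < b) (hab : Nat.Coprime a b) :
    Nat.card {p : ℕ × ℕ // a * p.1 + b * p.2 = n} = n / (a * b) ∨
    Nat.card {p : ℕ × ℕ // a * p.1 + b * p.2 = n} = n / (a * b) + 1 := by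
  obtain ⟨r, hr⟩ := Nat.exists_mul_modEq_of_coprime hb hab n
  rw [card_linear_solutions_eq_count ha hb hab hr, ← Nat.div_div_eq_div_mul]
  exact Nat.count_modEq_succ_eq_or hb _ _

theorem stmt_4 (a b n : ℕ) (ha : 0 < a) (hb : 0 < b) (hab : Nat.Coprime a b)
    (hn : 0 < n) :
    Nat.card {p : ℕ × ℕ // a * p.1 + b * p.2 = n} = n / (a * b) ∨
    Nat.card {p : ℕ × ℕ // a * p.1 + b * p.2 = n} = n / (a * b) + 1 :=
  stmt_4_general a b n ha hb hab
end

section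
/- Let a and b be coprime positive integers. For every integer n ≥ (a-1)(b-1), the equation ax + by = n has a solution in nonnegative integers x and y. -/
/-! Mathlib's `frobeniusNumber_pair` says that `a * b - a - b` is the largest integer not in the
additive monoid generated by `a` and `b`; the bound `(a - 1) * (b - 1)` is one more than this.
When `a` or `b` is at most `1`, coprimality forces one of them to be `1` and every `n` is
trivially representable. -/

namespace Nat

theorem Coprime.eq_one_or_eq_one_or_one_lt {a b : ℕ} (hab : Coprime a b) :
    a = 1 ∨ b = 1 ∨ 1 < a ∧ 1 < b := by
  rcases Nat.lt_or_ge 1 a with ha | ha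
  · rcases Nat.lt_or_ge 1 b with hb | hb
    · exact Or.inr (Or.inr ⟨ha, hb⟩)
    · interval_cases b
      · exact Or.inl ((coprime_zero_right a).mp hab)
      · exact Or.inr (Or.inl rfl)
  · interval_cases a
    · exact Or.inr (Or.inl ((coprime_zero_left b).mp hab))
    · exact Or.inl rfl

theorem mul_sub_sub_lt_sub_one_mul_sub_one {a b : ℕ} (ha : 1 < a) (hb : 1 < b) :
    a * b - a - b < (a - 1) * (b - 1) := by
  obtain ⟨a, rfl⟩ := Nat.exists_eq_add_of_lt ha
  obtain ⟨b, rfl⟩ := Nat.exists_eq_add_of_lt hb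
  simp only [Nat.add_sub_cancel_left, add_assoc]
  ring_nf
  omega

theorem exists_mul_add_mul_eq_of_sub_one_mul_sub_one_le {a b n : ℕ} (hab : Coprime a b)
    (ha : 1 < a) (hb : 1 < b) (hn : (a - 1) * (b - 1) ≤ n) :
    ∃ x y : ℕ, a * x + b * y = n := by
  have hmem : n ∈ AddSubmonoid.closure ({a, b} : Set ℕ) :=
    ((frobeniusNumber_iff.mp (frobeniusNumber_pair hab ha hb)).2 n
      ((mul_sub_sub_lt_sub_one_mul_sub_one ha hb).trans_le hn))
  obtain ⟨x, y, hxy⟩ := (AddSubmonoid.mem_closure_pair a b n).mp hmem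
  exact ⟨x, y, by simpa [mul_comm] using hxy⟩

end Nat

theorem stmt_5_general (a b : ℕ) (hab : Nat.Coprime a b)
    (n : ℕ) (hn : (a - 1) * (b - 1) ≤ n) :
    ∃ x y : ℕ, a * x + b * y = n := by
  rcases hab.eq_one_or_eq_one_or_one_lt with rfl | rfl | ⟨ha, hb⟩
  · exact ⟨n, 0, by simp⟩
  · exact ⟨0, n, by simp⟩
  · exact Nat.exists_mul_add_mul_eq_of_sub_one_mul_sub_one_le hab ha hb hn

theorem stmt_5 (a b : ℕ) (ha : 0 < a) (hb : 0 < b) (hab : Nat.Coprime a b)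
    (n : ℕ) (hn : (a - 1) * (b - 1) ≤ n) :
    ∃ x y : ℕ, a * x + b * y = n :=
  stmt_5_general a b hab n hn
end

section
/- For every positive integer m, the number of partitions p(m) of m satisfies p(m) ≤ e^{3√m}. -/
open Finset Real

namespace PB

/-- number of partitions -/
def p (n : ℕ) : ℕ := Fintype.card (Nat.Partition n)

/-- number of partitions of n with at least j parts equal to k -/
def N (n k j : ℕ) : ℕ :=
  (Finset.univ.filter (fun q : Nat.Partition n => j ≤ q.parts.count k)).card

lemma parts_sum_eq (n : ℕ) (q : Nat.Partition n) :
    ∑ k ∈ Finset.Icc 1 n, q.parts.count k * k = n := by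
  have hsub : q.parts.toFinset ⊆ Finset.Icc 1 n := by
    intro a ha
    rw [Multiset.mem_toFinset] at ha
    refine Finset.mem_Icc.2 ⟨q.parts_pos ha, ?_⟩
    calc a ≤ q.parts.sum := Multiset.single_le_sum (fun _ _ => Nat.zero_le _) a ha
    _ = n := q.parts_sum
  rw [← Finset.sum_subset hsub (by
    intro x _ hx
    rw [Multiset.count_eq_zero_of_notMem (by simpa using hx), zero_mul])]
  have h := Finset.sum_multiset_map_count q.parts (id : ℕ → ℕ)
  simpa [q.parts_sum, smul_eq_mul] using h.symm

lemma count_le (n : ℕ) (q : Nat.Partition n) {k : ℕ} (hk : k ∈ Finset.Icc 1 n) :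
    q.parts.count k ≤ n := by
  have h1 : q.parts.count k * k ≤ ∑ i ∈ Finset.Icc 1 n, q.parts.count i * i :=
    Finset.single_le_sum (f := fun i => q.parts.count i * i) (fun i _ => Nat.zero_le _) hk
  rw [parts_sum_eq] at h1
  have : 1 ≤ k := (Finset.mem_Icc.1 hk).1
  calc q.parts.count k = q.parts.count k * 1 := (mul_one _).symm
  _ ≤ q.parts.count k * k := Nat.mul_le_mul_left _ this
  _ ≤ n := h1

lemma count_eq_sum (n : ℕ) (q : Nat.Partition n) {k : ℕ} (hk : k ∈ Finset.Icc 1 n) :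
    q.parts.count k = ∑ j ∈ Finset.Icc 1 n, if j ≤ q.parts.count k then 1 else 0 := by
  have hcle := count_le n q hk
  have hfil : (Finset.Icc 1 n).filter (fun j => j ≤ q.parts.count k)
      = Finset.Icc 1 (q.parts.count k) := by
    ext j
    simp only [Finset.mem_filter, Finset.mem_Icc]
    omega
  rw [Finset.sum_ite, Finset.sum_const, Finset.sum_const, smul_eq_mul, mul_one,
    smul_eq_mul, mul_zero, add_zero, hfil, Nat.card_Icc]
  omega

lemma key_identity (n : ℕ) :
    n * p n = ∑ k ∈ Finset.Icc 1 n, ∑ j ∈ Finset.Icc 1 n, N n k j * k := by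
  have step1 : n * p n
      = ∑ q : Nat.Partition n, ∑ k ∈ Finset.Icc 1 n, q.parts.count k * k :=
    calc n * p n = ∑ _q : Nat.Partition n, n := by
          rw [Finset.sum_const, Finset.card_univ, smul_eq_mul, mul_comm, p]
    _ = _ := Finset.sum_congr rfl (fun q _ => (parts_sum_eq n q).symm)
  rw [step1, Finset.sum_comm]
  refine Finset.sum_congr rfl (fun k hk => ?_)
  have hcount : ∑ q : Nat.Partition n, q.parts.count k
      = ∑ j ∈ Finset.Icc 1 n, N n k j := by
    calc ∑ q : Nat.Partition n, q.parts.count k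
        = ∑ q : Nat.Partition n, ∑ j ∈ Finset.Icc 1 n,
            (if j ≤ q.parts.count k then 1 else 0) :=
          Finset.sum_congr rfl (fun q _ => count_eq_sum n q hk)
      _ = ∑ j ∈ Finset.Icc 1 n, N n k j := by
          rw [Finset.sum_comm]
          refine Finset.sum_congr rfl (fun j _ => ?_)
          simp [N, Finset.sum_boole]
  rw [← Finset.sum_mul, hcount, Finset.sum_mul]

def toSmaller (n k j : ℕ) (q : {q : Nat.Partition n // j ≤ q.parts.count k}) :
    Nat.Partition (n - j * k) where
  parts := q.1.parts - Multiset.replicate j k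
  parts_pos := fun {i} hi => q.1.parts_pos (Multiset.mem_of_le tsub_le_self hi)
  parts_sum := by
    have hle : Multiset.replicate j k ≤ q.1.parts :=
      Multiset.le_count_iff_replicate_le.1 q.2
    have h := congrArg Multiset.sum (tsub_add_cancel_of_le hle)
    rw [Multiset.sum_add, Multiset.sum_replicate, q.1.parts_sum, smul_eq_mul] at h
    omega

lemma toSmaller_inj (n k j : ℕ) : Function.Injective (toSmaller n k j) := by
  intro q₁ q₂ h
  have hle₁ : Multiset.replicate j k ≤ q₁.1.parts :=
    Multiset.le_count_iff_replicate_le.1 q₁.2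
  have hle₂ : Multiset.replicate j k ≤ q₂.1.parts :=
    Multiset.le_count_iff_replicate_le.1 q₂.2
  have h' : q₁.1.parts - Multiset.replicate j k = q₂.1.parts - Multiset.replicate j k := by
    simpa [toSmaller, Nat.Partition.ext_iff] using h
  have heq : q₁.1.parts = q₂.1.parts := by
    have := congrArg (· + Multiset.replicate j k) h'
    simpa [tsub_add_cancel_of_le hle₁, tsub_add_cancel_of_le hle₂] using this
  exact Subtype.ext (Nat.Partition.ext heq)

lemma N_le (n k j : ℕ) (hjk : j * k ≤ n) :
    N n k j ≤ p (n - j * k) := by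
  classical
  have hcard : N n k j = Fintype.card {q : Nat.Partition n // j ≤ q.parts.count k} := by
    rw [N, Fintype.card_subtype]
  rw [hcard, p]
  exact Fintype.card_le_of_injective (toSmaller n k j) (toSmaller_inj n k j)

lemma N_eq_zero (n k j : ℕ) (hjk : n < j * k) : N n k j = 0 := by
  rw [N, Finset.card_eq_zero, Finset.filter_eq_empty_iff]
  intro q _ hc
  have hle : Multiset.replicate j k ≤ q.parts :=
    Multiset.le_count_iff_replicate_le.1 hc
  obtain ⟨u, hu⟩ := Multiset.le_iff_exists_add.1 hle
  have := congrArg Multiset.sum hu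
  rw [Multiset.sum_add, Multiset.sum_replicate, q.parts_sum, smul_eq_mul] at this
  omega

end PB

namespace PB

lemma sum_inv_sq_aux : ∀ n : ℕ, 1 ≤ n → ∑ j ∈ Finset.Icc 1 n, (1 / (j : ℝ)) ^ 2 ≤ 2 - 1 / (n : ℝ) := by
  intro n
  induction n with
  | zero => omega
  | succ m ih =>
    intro _
    rcases Nat.eq_zero_or_pos m with hm | hm
    · subst hm
      norm_num
    · have hm' : (0:ℝ) < m := by exact_mod_cast hm
      rw [Finset.sum_Icc_succ_top (by omega)]
      have h2 : (1 / ((m : ℝ) + 1)) ^ 2 ≤ 1 / m - 1 / (m + 1) := by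
        rw [div_sub_div _ _ (ne_of_gt hm') (by positivity), div_pow, one_pow,
          div_le_div_iff₀ (by positivity) (by positivity)]
        ring_nf
        nlinarith
      have h3 := ih hm
      push_cast
      push_cast at h3
      nlinarith

lemma sum_inv_sq (n : ℕ) : ∑ j ∈ Finset.Icc 1 n, (1 / (j : ℝ)) ^ 2 ≤ 2 := by
  rcases Nat.eq_zero_or_pos n with hn | hn
  · subst hn; simp
  · have h0 : (0:ℝ) < n := by exact_mod_cast hn
    have h1 : (0:ℝ) ≤ 1 / n := by positivity
    linarith [sum_inv_sq_aux n hn]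

lemma geom_bound (nn : ℕ) {u : ℝ} (hu : 0 < u) :
    ∑ k ∈ Finset.Icc 1 nn, (k : ℝ) * Real.exp (-u) ^ k ≤ 1 / u ^ 2 := by
  set y := Real.exp (-u) with hy
  have hy0 : 0 < y := Real.exp_pos _
  have hy1 : y < 1 := by
    rw [hy, Real.exp_lt_one_iff]
    linarith
  have hynorm : ‖y‖ < 1 := by rwa [Real.norm_eq_abs, abs_of_pos hy0]
  have hsum : Summable (fun k : ℕ => (k : ℝ) * y ^ k) := by
    have := summable_pow_mul_geometric_of_norm_lt_one (R := ℝ) 1 hynorm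
    simpa using this
  have h1 : ∑ k ∈ Finset.Icc 1 nn, (k : ℝ) * y ^ k ≤ ∑' k : ℕ, (k : ℝ) * y ^ k :=
    Summable.sum_le_tsum _ (fun i _ => by positivity) hsum
  have h2 : ∑' k : ℕ, (k : ℝ) * y ^ k = y / (1 - y) ^ 2 :=
    tsum_coe_mul_geometric_of_norm_lt_one hynorm
  have hb0 : 0 < Real.exp (-(u / 2)) := Real.exp_pos _
  have hsqb : Real.exp (-(u / 2)) * Real.exp (-(u / 2)) = y := by
    rw [← Real.exp_add, hy]; ring_nf
  have hkey : u * Real.exp (-(u / 2)) ≤ 1 - y := by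
    have hsinh : u / 2 < Real.sinh (u / 2) := Real.self_lt_sinh_iff.2 (by linarith)
    rw [Real.sinh_eq] at hsinh
    have hmul : u * Real.exp (-(u / 2))
        ≤ (Real.exp (u / 2) - Real.exp (-(u / 2))) * Real.exp (-(u / 2)) := by
      apply mul_le_mul_of_nonneg_right _ (le_of_lt hb0)
      linarith
    have hprod : Real.exp (u / 2) * Real.exp (-(u / 2)) = 1 := by
      rw [← Real.exp_add]; norm_num
    nlinarith
  have hkey2 : u ^ 2 * y ≤ (1 - y) ^ 2 := by
    have hb : 0 ≤ u * Real.exp (-(u / 2)) := by positivity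
    nlinarith
  have h3 : y / (1 - y) ^ 2 ≤ 1 / u ^ 2 := by
    rw [div_le_div_iff₀ (pow_pos (by linarith) 2) (pow_pos hu 2)]
    nlinarith
  calc ∑ k ∈ Finset.Icc 1 nn, (k : ℝ) * y ^ k ≤ y / (1 - y) ^ 2 := h2 ▸ h1
  _ ≤ 1 / u ^ 2 := h3

lemma sqrt_concave {a m : ℝ} (ha : 0 < a) (hm0 : 0 ≤ m) (hm : m ≤ a) :
    Real.sqrt (a - m) ≤ Real.sqrt a - m / (2 * Real.sqrt a) := by
  set s := Real.sqrt a with hs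
  have hs0 : 0 < s := Real.sqrt_pos.2 ha
  have hss : s ^ 2 = a := Real.sq_sqrt (le_of_lt ha)
  have hrhs : 0 ≤ s - m / (2 * s) := by
    rw [sub_nonneg, div_le_iff₀ (by positivity)]
    nlinarith
  have hle : a - m ≤ (s - m / (2 * s)) ^ 2 := by
    have expand : (s - m / (2 * s)) ^ 2 = a - m + (m / (2 * s)) ^ 2 := by
      field_simp
      nlinarith
    nlinarith [sq_nonneg (m / (2 * s))]
  calc Real.sqrt (a - m) ≤ Real.sqrt ((s - m / (2 * s)) ^ 2) := Real.sqrt_le_sqrt hle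
  _ = s - m / (2 * s) := Real.sqrt_sq hrhs

end PB

namespace PB

lemma term_bound (n : ℕ) (hn : 0 < n)
    (ih : ∀ m, m < n → (p m : ℝ) ≤ Real.exp (3 * Real.sqrt m))
    {k j : ℕ} (hk : k ∈ Finset.Icc 1 n) (hj : j ∈ Finset.Icc 1 n) :
    (N n k j : ℝ)
      ≤ Real.exp (3 * Real.sqrt n) * Real.exp (-(3 / (2 * Real.sqrt n))) ^ (j * k) := by
  have hn' : (0:ℝ) < n := by exact_mod_cast hn
  have hs0 : 0 < Real.sqrt n := Real.sqrt_pos.2 hn'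
  rcases le_or_gt (j * k) n with hjk | hjk
  · have hj1 : 1 ≤ j := (Finset.mem_Icc.1 hj).1
    have hk1 : 1 ≤ k := (Finset.mem_Icc.1 hk).1
    have hlt : n - j * k < n := by
      have h1 : 1 ≤ j * k := Nat.mul_le_mul hj1 hk1
      omega
    have h1 : (N n k j : ℝ) ≤ (p (n - j * k) : ℝ) := by exact_mod_cast N_le n k j hjk
    have h2 := ih _ hlt
    have hcast : ((n - j * k : ℕ) : ℝ) = (n : ℝ) - ((j * k : ℕ) : ℝ) := by
      exact Nat.cast_sub hjk
    have h3 : Real.sqrt ((n - j * k : ℕ) : ℝ)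
        ≤ Real.sqrt n - ((j * k : ℕ) : ℝ) / (2 * Real.sqrt n) := by
      rw [hcast]
      exact sqrt_concave hn' (by positivity) (by exact_mod_cast hjk)
    have h4 : 3 * Real.sqrt ((n - j * k : ℕ) : ℝ)
        ≤ 3 * Real.sqrt n + ((j * k : ℕ) : ℝ) * (-(3 / (2 * Real.sqrt n))) := by
      have e : ((j * k : ℕ) : ℝ) * (-(3 / (2 * Real.sqrt n)))
          = -(3 * (((j * k : ℕ) : ℝ) / (2 * Real.sqrt n))) := by ring
      rw [e]
      linarith
    calc (N n k j : ℝ) ≤ (p (n - j * k) : ℝ) := h1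
    _ ≤ Real.exp (3 * Real.sqrt ((n - j * k : ℕ) : ℝ)) := h2
    _ ≤ Real.exp (3 * Real.sqrt n + ((j * k : ℕ) : ℝ) * (-(3 / (2 * Real.sqrt n)))) :=
        Real.exp_le_exp.2 h4
    _ = _ := by rw [Real.exp_add, Real.exp_nat_mul]
  · rw [N_eq_zero n k j hjk]
    push_cast
    positivity

lemma main_bound : ∀ n : ℕ, (p n : ℝ) ≤ Real.exp (3 * Real.sqrt n) := by
  intro n
  induction n using Nat.strong_induction_on with
  | _ n ih =>
  rcases Nat.eq_zero_or_pos n with h0 | hn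
  · subst h0
    simp [p, Real.exp_nonneg]
  · have hn' : (0:ℝ) < n := by exact_mod_cast hn
    set s := Real.sqrt n with hs
    have hs0 : 0 < s := Real.sqrt_pos.2 hn'
    have hss : s ^ 2 = n := Real.sq_sqrt (le_of_lt hn')
    set u := 3 / (2 * s) with hu
    have hu0 : 0 < u := by positivity
    set E := Real.exp (3 * s) with hE
    have hE0 : 0 < E := Real.exp_pos _
    have hid : (n : ℝ) * p n
        = ∑ k ∈ Finset.Icc 1 n, ∑ j ∈ Finset.Icc 1 n, (N n k j : ℝ) * k := by
      exact_mod_cast congrArg (Nat.cast : ℕ → ℝ) (key_identity n)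
    have hstep1 : (n:ℝ) * p n
        ≤ ∑ j ∈ Finset.Icc 1 n, ∑ k ∈ Finset.Icc 1 n, (E * Real.exp (-u) ^ (j * k)) * k := by
      rw [hid, Finset.sum_comm]
      refine Finset.sum_le_sum fun j hj => Finset.sum_le_sum fun k hk => ?_
      exact mul_le_mul_of_nonneg_right (term_bound n hn ih hk hj) (Nat.cast_nonneg k)
    have hstep2 : ∀ j ∈ Finset.Icc 1 n,
        ∑ k ∈ Finset.Icc 1 n, (E * Real.exp (-u) ^ (j * k)) * k
          ≤ E * (1 / u ^ 2) * (1 / (j:ℝ)) ^ 2 := by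
      intro j hj
      have hj1 : 1 ≤ j := (Finset.mem_Icc.1 hj).1
      have hj0 : (0:ℝ) < j := by exact_mod_cast hj1
      have hju : 0 < (j:ℝ) * u := mul_pos hj0 hu0
      have hrw : ∀ k : ℕ, Real.exp (-u) ^ (j * k) = Real.exp (-((j:ℝ) * u)) ^ k := by
        intro k
        rw [← Real.exp_nat_mul, ← Real.exp_nat_mul]
        congr 1
        push_cast
        ring
      have heq : ∑ k ∈ Finset.Icc 1 n, (E * Real.exp (-u) ^ (j * k)) * k
          = E * ∑ k ∈ Finset.Icc 1 n, (k:ℝ) * Real.exp (-((j:ℝ) * u)) ^ k := by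
        rw [Finset.mul_sum]
        refine Finset.sum_congr rfl fun k _ => ?_
        rw [hrw]
        ring
      rw [heq]
      have hg := geom_bound n hju
      have e2 : E * (1 / u ^ 2) * (1 / (j:ℝ)) ^ 2 = E * (1 / ((j:ℝ) * u) ^ 2) := by
        rw [mul_pow]
        ring
      rw [e2]
      exact mul_le_mul_of_nonneg_left hg (le_of_lt hE0)
    have hstep3 : ∑ j ∈ Finset.Icc 1 n, E * (1 / u ^ 2) * (1 / (j:ℝ)) ^ 2 ≤ E * n := by
      rw [← Finset.mul_sum]
      have h2 := sum_inv_sq n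
      have hsum0 : (0:ℝ) ≤ ∑ j ∈ Finset.Icc 1 n, (1 / (j:ℝ)) ^ 2 :=
        Finset.sum_nonneg fun j _ => by positivity
      have hu2 : 1 / u ^ 2 = 4 * (n:ℝ) / 9 := by
        rw [hu]
        rw [div_pow, one_div_div]
        rw [mul_pow]
        rw [hss]
        norm_num
      calc E * (1 / u ^ 2) * ∑ j ∈ Finset.Icc 1 n, (1 / (j:ℝ)) ^ 2
          ≤ E * (1 / u ^ 2) * 2 := by
            apply mul_le_mul_of_nonneg_left h2
            positivity
      _ = E * (8 * (n:ℝ) / 9) := by rw [hu2]; ring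
      _ ≤ E * n := by nlinarith
    have hfin : (n:ℝ) * p n ≤ (n:ℝ) * E := by
      calc (n:ℝ) * p n ≤ _ := hstep1
      _ ≤ ∑ j ∈ Finset.Icc 1 n, E * (1 / u ^ 2) * (1 / (j:ℝ)) ^ 2 :=
          Finset.sum_le_sum hstep2
      _ ≤ E * n := hstep3
      _ = (n:ℝ) * E := mul_comm _ _
    exact le_of_mul_le_mul_left hfin hn'

end PB

theorem stmt_6 (m : ℕ) (hm : 0 < m) :
    (Nat.card (Nat.Partition m) : ℝ) ≤ Real.exp (3 * Real.sqrt m) := by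
  rw [Nat.card_eq_fintype_card]
  exact PB.main_bound m
end

section
/- For positive integers s and L, the generating function for nonempty partitions π with smallest part s(π) ≥ s+1 and largest part satisfying l(π) - s(π) ≤ L equals (1/(1-q^L)) · (1/((1-q^{s+1})(1-q^{s+2})⋯(1-q^{L+s})) − 1) as formal power series. -/
/-!
Write `a = s + 1` and let `F` count the partitions in question. Lowering the largest part by `L`
maps the partitions of `n + L` counted by `F` whose largest part is at least `a + L` bijectively
onto the partitions of `n` counted by `F`; the inverse raises the smallest part by `L`. The
remaining partitions counted by `F` are exactly the nonempty partitions into parts from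
`[a, a + L)`, with generating function `∏_{a ≤ i < a + L} (1 - q^i)⁻¹ - 1`. Hence `(1 - q^L) F`
is that generating function.
-/

open Finset PowerSeries
open scoped PowerSeries.WithPiTopology

namespace Nat.Partition

theorem prod_one_sub_X_pow_mul_powerSeriesMk_card_restricted {R : Type*} [CommRing R]
    {S : Finset ℕ} (hS : 0 ∉ S) :
    (∏ i ∈ S, (1 - X ^ i)) * PowerSeries.mk (fun n ↦ (#(restricted n (· ∈ S)) : R)) = 1 := by
  -- The infinite product formula only needs some topology on `R`; the discrete one will do.
  let _ : TopologicalSpace R := ⊥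
  have _ : DiscreteTopology R := ⟨rfl⟩
  have hinj : Set.InjOn (· + 1) ((· + 1) ⁻¹' (S : Set ℕ)) :=
    fun _ _ _ _ h ↦ Nat.succ_injective h
  rw [← (hasProd_powerSeriesMk_card_restricted R (· ∈ S)).tprod_eq,
    tprod_eq_prod (s := S.preimage (· + 1) hinj) fun i hi ↦ if_neg (by simpa using hi),
    ← prod_preimage (· + 1) S hinj _ fun x hx hx' ↦
      (hS (by simp_all [Nat.exists_add_one_eq])).elim,
    ← prod_mul_distrib]
  refine prod_eq_one fun i hi ↦ ?_
  rw [if_pos (by simpa using hi)]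
  simp_rw [pow_mul]
  exact WithPiTopology.one_sub_mul_tsum_pow_of_constantCoeff_eq_zero (by simp)

def boundedSpread (n a L : ℕ) : Finset n.Partition :=
  univ.filter fun p ↦
    p.parts ≠ 0 ∧ (∀ j ∈ p.parts, a ≤ j) ∧ ∀ j ∈ p.parts, ∀ k ∈ p.parts, j ≤ k + L

def replacePart {n m x y : ℕ} (p : n.Partition) (hx : x ∈ p.parts) (hy : 0 < y)
    (h : n + y = m + x) : m.Partition where
  parts := y ::ₘ p.parts.erase x
  parts_pos := by
    simp only [Multiset.mem_cons]
    rintro i (rfl | hi)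
    exacts [hy, p.parts_pos (Multiset.mem_of_mem_erase hi)]
  parts_sum := by
    have := Multiset.sum_erase hx
    rw [Multiset.sum_cons, p.parts_sum] at *
    omega

@[simp]
theorem replacePart_parts {n m x y : ℕ} (p : n.Partition) (hx : x ∈ p.parts) (hy : 0 < y)
    (h : n + y = m + x) : (replacePart p hx hy h).parts = y ::ₘ p.parts.erase x :=
  rfl

theorem cons_erase_parts_replacePart {n m x y : ℕ} (p : n.Partition) (hx : x ∈ p.parts)
    (hy : 0 < y) (h : n + y = m + x) : x ::ₘ (replacePart p hx hy h).parts.erase y = p.parts := by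
  rw [replacePart_parts, Multiset.erase_cons_head, Multiset.cons_erase hx]

theorem forall_mem_replacePart_parts {n m x y : ℕ} {P : ℕ → Prop} (p : n.Partition)
    (hx : x ∈ p.parts) (hy : 0 < y) (h : n + y = m + x) (hPy : P y) (hP : ∀ j ∈ p.parts, P j) :
    ∀ j ∈ (replacePart p hx hy h).parts, P j := by
  simp only [replacePart_parts, Multiset.mem_cons]
  rintro j (rfl | hj)
  exacts [hPy, hP j (Multiset.mem_of_mem_erase hj)]

variable {n a L c : ℕ} {p : n.Partition}

theorem mem_boundedSpread_of_forall_mem_Icc {d : ℕ} (hne : p.parts ≠ 0) (hac : a ≤ c)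
    (hd : d ≤ c + L) (hp : ∀ j ∈ p.parts, j ∈ Set.Icc c d) : p ∈ boundedSpread n a L := by
  refine mem_filter.2 ⟨mem_univ _, hne, fun j hj ↦ hac.trans (hp j hj).1, fun j hj k hk ↦ ?_⟩
  have := hp j hj
  have := hp k hk
  simp only [Set.mem_Icc] at *
  omega

noncomputable def smallestPart (p : n.Partition) : ℕ := sInf {j : ℕ | j ∈ p.parts}

noncomputable def largestPart (p : n.Partition) : ℕ := sSup {j : ℕ | j ∈ p.parts}

theorem smallestPart_le {j : ℕ} (hj : j ∈ p.parts) : p.smallestPart ≤ j :=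
  Nat.sInf_le hj

theorem smallestPart_mem (hp : p.parts ≠ 0) : p.smallestPart ∈ p.parts :=
  Nat.sInf_mem (Multiset.exists_mem_of_ne_zero hp)

theorem bddAbove_parts : BddAbove {j : ℕ | j ∈ p.parts} :=
  ⟨n, fun _ ↦ p.le_of_mem_parts⟩

theorem le_largestPart {j : ℕ} (hj : j ∈ p.parts) : j ≤ p.largestPart :=
  le_csSup bddAbove_parts hj

theorem largestPart_mem (hp : p.parts ≠ 0) : p.largestPart ∈ p.parts :=
  Nat.sSup_mem (Multiset.exists_mem_of_ne_zero hp) bddAbove_parts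

theorem smallestPart_eq (hc : c ∈ p.parts) (h : ∀ j ∈ p.parts, c ≤ j) : p.smallestPart = c :=
  IsLeast.csInf_eq ⟨hc, h⟩

theorem largestPart_eq (hc : c ∈ p.parts) (h : ∀ j ∈ p.parts, j ≤ c) : p.largestPart = c :=
  IsGreatest.csSup_eq ⟨hc, h⟩

theorem forall_mem_Icc_smallestPart (hp : p ∈ boundedSpread n a L) :
    ∀ j ∈ p.parts, j ∈ Set.Icc p.smallestPart (p.smallestPart + L) := by
  obtain ⟨-, hne, -, hL⟩ := mem_filter.1 hp
  exact fun j hj ↦ ⟨smallestPart_le hj, hL j hj _ (smallestPart_mem hne)⟩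

theorem forall_mem_Icc_largestPart (hp : p ∈ boundedSpread n a L) :
    ∀ j ∈ p.parts, j ∈ Set.Icc (p.largestPart - L) p.largestPart := by
  obtain ⟨-, hne, -, hL⟩ := mem_filter.1 hp
  exact fun j hj ↦ ⟨by have := hL _ (largestPart_mem hne) j hj; omega, le_largestPart hj⟩

theorem parts_ne_zero_of_mem_boundedSpread (hp : p ∈ boundedSpread n a L) : p.parts ≠ 0 :=
  (mem_filter.1 hp).2.1

theorem le_smallestPart_of_mem_boundedSpread (hp : p ∈ boundedSpread n a L) :
    a ≤ p.smallestPart :=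
  (mem_filter.1 hp).2.2.1 _ (smallestPart_mem (parts_ne_zero_of_mem_boundedSpread hp))

theorem card_filter_le_largestPart_boundedSpread (ha : 0 < a) :
    #{p ∈ boundedSpread (n + L) a L | a + L ≤ p.largestPart} = #(boundedSpread n a L) := by
  refine card_bij'
    (fun p hp ↦ replacePart (m := n) p (x := p.largestPart) (y := p.largestPart - L)
      (largestPart_mem (parts_ne_zero_of_mem_boundedSpread (mem_filter.1 hp).1))
      (by have := (mem_filter.1 hp).2; omega) (by have := (mem_filter.1 hp).2; omega))
    (fun q hq ↦ replacePart (m := n + L) q (x := q.smallestPart) (y := q.smallestPart + L)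
      (smallestPart_mem (parts_ne_zero_of_mem_boundedSpread hq))
      (by have := le_smallestPart_of_mem_boundedSpread hq; omega) (by omega))
    ?_ ?_ ?_ ?_
  · intro p hp
    obtain ⟨hp, hle⟩ := mem_filter.1 hp
    refine mem_boundedSpread_of_forall_mem_Icc (c := p.largestPart - L) (by simp) (by omega)
      (by omega)
      (forall_mem_replacePart_parts _ _ _ _ ⟨le_rfl, by omega⟩ (forall_mem_Icc_largestPart hp))
  · intro q hq
    have hle := le_smallestPart_of_mem_boundedSpread hq
    refine mem_filter.2 ⟨mem_boundedSpread_of_forall_mem_Icc (c := q.smallestPart) (by simp)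
      hle le_rfl (forall_mem_replacePart_parts _ _ _ _ ⟨by omega, le_rfl⟩
        (forall_mem_Icc_smallestPart hq)),
      (Nat.add_le_add_right hle L).trans (le_largestPart (by simp))⟩
  · intro p hp
    obtain ⟨hp, hle⟩ := mem_filter.1 hp
    ext1
    rw [replacePart_parts, smallestPart_eq (by simp)
      (forall_mem_replacePart_parts _ _ _ _ le_rfl fun j hj ↦
        (forall_mem_Icc_largestPart hp j hj).1),
      Nat.sub_add_cancel (by omega), cons_erase_parts_replacePart]
  · intro q hq
    ext1
    rw [replacePart_parts, largestPart_eq (by simp)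
      (forall_mem_replacePart_parts _ _ _ _ le_rfl fun j hj ↦
        (forall_mem_Icc_smallestPart hq j hj).2),
      Nat.add_sub_cancel, cons_erase_parts_replacePart]

theorem filter_largestPart_lt_boundedSpread (hn : n ≠ 0) :
    {p ∈ boundedSpread n a L | p.largestPart < a + L} = restricted n (· ∈ Ico a (a + L)) := by
  ext p
  simp only [boundedSpread, restricted, mem_filter, mem_univ, true_and, mem_Ico]
  constructor
  · rintro ⟨⟨-, ha, -⟩, hlt⟩ j hj
    exact ⟨ha j hj, (le_largestPart hj).trans_lt hlt⟩
  · intro h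
    have hne : p.parts ≠ 0 := fun h0 ↦ hn (by rw [← p.parts_sum, h0, Multiset.sum_zero])
    refine ⟨⟨hne, fun j hj ↦ (h j hj).1, fun j hj k hk ↦ ?_⟩, (h _ (largestPart_mem hne)).2⟩
    have := h j hj
    have := h k hk
    omega

theorem card_boundedSpread (ha : 0 < a) (hn : n ≠ 0) :
    #(boundedSpread n a L) = #(restricted n (· ∈ Ico a (a + L))) +
      if L ≤ n then #(boundedSpread (n - L) a L) else 0 := by
  rw [← card_filter_add_card_filter_not (fun p ↦ p.largestPart < a + L),
    filter_largestPart_lt_boundedSpread hn]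
  congr 1
  simp only [not_lt]
  split_ifs with hLn
  · obtain ⟨k, rfl⟩ := Nat.exists_eq_add_of_le' hLn
    rw [Nat.add_sub_cancel, card_filter_le_largestPart_boundedSpread ha]
  · refine Finset.card_eq_zero.2 (filter_eq_empty_iff.2 fun p hp hle ↦ hLn ?_)
    have := p.le_of_mem_parts (largestPart_mem (parts_ne_zero_of_mem_boundedSpread hp))
    omega

theorem one_sub_X_pow_mul_powerSeriesMk_card_boundedSpread {R : Type*} [CommRing R]
    (ha : 0 < a) (hL : 0 < L) :
    (1 - X ^ L) * PowerSeries.mk (fun n ↦ (#(boundedSpread n a L) : R)) =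
      PowerSeries.mk (fun n ↦ (#(restricted n (· ∈ Ico a (a + L))) : R)) - 1 := by
  ext n
  rw [sub_mul, one_mul, map_sub, coeff_X_pow_mul', map_sub, coeff_mk, coeff_mk, coeff_one]
  rcases eq_or_ne n 0 with rfl | hn
  · simp [boundedSpread, restricted, hL.ne']
  · rw [card_boundedSpread ha hn, if_neg hn]
    split_ifs <;> simp

end Nat.Partition

open Finset PowerSeries Nat.Partition

theorem stmt_9_general (s L : ℕ) (hL : 0 < L) :
    (PowerSeries.mk fun n =>
        (Nat.card {p : Nat.Partition n //
            p.parts ≠ 0 ∧ (∀ j ∈ p.parts, s + 1 ≤ j) ∧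
              ∀ j ∈ p.parts, ∀ k ∈ p.parts, j ≤ k + L} : ℚ)) =
      (1 - (PowerSeries.X : PowerSeries ℚ) ^ L)⁻¹ *
        ((∏ i ∈ Finset.range L, (1 - (PowerSeries.X : PowerSeries ℚ) ^ (s + 1 + i)))⁻¹ - 1) := by
  have hcard (n : ℕ) : Nat.card {p : Nat.Partition n // p.parts ≠ 0 ∧
      (∀ j ∈ p.parts, s + 1 ≤ j) ∧ ∀ j ∈ p.parts, ∀ k ∈ p.parts, j ≤ k + L} =
      #(boundedSpread n (s + 1) L) := by
    rw [Nat.card_eq_fintype_card, Fintype.card_subtype, boundedSpread]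
  have hprod := prod_one_sub_X_pow_mul_powerSeriesMk_card_restricted (R := ℚ)
    (S := Ico (s + 1) (s + 1 + L)) (by simp)
  rw [prod_Ico_eq_prod_range, Nat.add_sub_cancel_left] at hprod
  have hunit : constantCoeff (∏ i ∈ range L, (1 - X ^ (s + 1 + i)) : ℚ⟦X⟧) ≠ 0 :=
    left_ne_zero_of_mul_eq_one (by rw [← map_mul, hprod, map_one])
  simp_rw [hcard, (inv_eq_iff_mul_eq_one hunit).2 ((mul_comm _ _).trans hprod),
    ← one_sub_X_pow_mul_powerSeriesMk_card_boundedSpread (Nat.succ_pos s) hL, ← mul_assoc,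
    PowerSeries.inv_mul_cancel _ (by simp [hL.ne'] : constantCoeff (1 - X ^ L : ℚ⟦X⟧) ≠ 0),
    one_mul]

theorem stmt_9 (s L : ℕ) (hs : 0 < s) (hL : 0 < L) :
    (PowerSeries.mk fun n =>
        (Nat.card {p : Nat.Partition n //
            p.parts ≠ 0 ∧ (∀ j ∈ p.parts, s + 1 ≤ j) ∧
              ∀ j ∈ p.parts, ∀ k ∈ p.parts, j ≤ k + L} : ℚ)) =
      (1 - (PowerSeries.X : PowerSeries ℚ) ^ L)⁻¹ *
        ((∏ i ∈ Finset.range L, (1 - (PowerSeries.X : PowerSeries ℚ) ^ (s + 1 + i)))⁻¹ - 1) :=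
  stmt_9_general s L hL
end

section
/- For positive integers s and L, define G_{L,s}(q) as the generating series whose coefficient of q^n is the number of partitions of n with smallest part exactly s and largest minus smallest part at most L, minus the number of partitions of n with smallest part at least s+1 and largest minus smallest part at most L. Define H_{L,s,k}(q) = q^s(1-q^k)/((1-q^s)(1-q^{s+1})⋯(1-q^{L+s})) − (1/((1-q^{s+1})⋯(1-q^{L+s})) − 1). Then G_{L,s}(q) = H_{L,s,L}(q)/(1-q^L) as formal power series. -/
/-!
Write `A_m` for the generating function of partitions with smallest part `m` and largest part
at most `m + L`, and `B_m` for that of nonempty partitions whose parts are all `≥ m` and whose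
largest and smallest parts differ by at most `L`. Removing one copy of the smallest part
identifies `A_m` with `q^m / (q^m; q)_{L+1}`. Sorting the partitions counted by `B_m` by whether
`m` is a part gives `B_m = A_m + B_{m+1}`, and `(1 - q^L) A_m = 1/(q^m; q)_L - 1/(q^{m+1}; q)_L`,
so `(1 - q^L) B_m - 1/(q^m; q)_L` does not depend on `m`. It is `≡ -1` modulo `q^m` for every
`m`, hence equals `-1`, and the theorem is the resulting formula for `A_s - B_{s+1}`.
-/

open PowerSeries Finset

namespace PowerSeries

variable {R : Type*} [CommRing R] {K : Type*} [Field K]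

theorem eq_zero_of_forall_X_pow_dvd {φ : R⟦X⟧} (h : ∀ n, X ^ n ∣ φ) : φ = 0 := by
  ext n
  exact X_pow_dvd_iff.1 (h (n + 1)) n n.lt_succ_self

theorem constantCoeff_prod_one_sub_X_pow {S : Finset ℕ} (hS : 0 ∉ S) :
    constantCoeff (∏ i ∈ S, (1 - X ^ i : R⟦X⟧)) = 1 := by
  rw [map_prod]
  exact prod_eq_one fun i hi ↦ by simp [zero_pow (ne_of_mem_of_not_mem hi hS)]

theorem constantCoeff_one_sub_X_pow_ne_zero {k : ℕ} (hk : k ≠ 0) :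
    constantCoeff (1 - X ^ k : K⟦X⟧) ≠ 0 := by
  simp [zero_pow hk]

theorem inv_eq_mul_mul_inv {φ ψ : K⟦X⟧} (hψ : constantCoeff ψ ≠ 0) :
    φ⁻¹ = ψ * (φ * ψ)⁻¹ := by
  rw [PowerSeries.mul_inv_rev, ← mul_assoc, PowerSeries.mul_inv_cancel _ hψ, one_mul]

variable (R) in
/-- The `q`-Pochhammer symbol `(q^a; q)_n`. -/
noncomputable def qPochhammer (a n : ℕ) : R⟦X⟧ := ∏ i ∈ range n, (1 - X ^ (a + i))

theorem qPochhammer_eq_prod_Ico (a n : ℕ) :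
    qPochhammer R a n = ∏ i ∈ Ico a (a + n), (1 - X ^ i) := by
  rw [prod_Ico_eq_prod_range, add_tsub_cancel_left, qPochhammer]

theorem constantCoeff_qPochhammer {a : ℕ} (ha : 0 < a) (n : ℕ) :
    constantCoeff (qPochhammer R a n) = 1 := by
  rw [qPochhammer_eq_prod_Ico]
  exact constantCoeff_prod_one_sub_X_pow (by simp; omega)

theorem qPochhammer_succ_right (a n : ℕ) :
    qPochhammer R a (n + 1) = qPochhammer R a n * (1 - X ^ (a + n)) :=
  prod_range_succ _ _

theorem qPochhammer_succ_left (a n : ℕ) :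
    qPochhammer R a (n + 1) = (1 - X ^ a) * qPochhammer R (a + 1) n := by
  simp only [qPochhammer, prod_range_succ', add_zero, add_right_comm a, add_assoc]
  exact mul_comm _ _

theorem X_pow_dvd_qPochhammer_sub_one (a n : ℕ) : X ^ a ∣ qPochhammer R a n - 1 := by
  induction n with
  | zero => simp [qPochhammer]
  | succ n ih =>
    have hsplit : qPochhammer R a n * (1 - X ^ a * X ^ n) - 1 =
        (qPochhammer R a n - 1) - X ^ a * (X ^ n * qPochhammer R a n) := by ring
    rw [qPochhammer_succ_right, pow_add, hsplit]
    exact ih.sub (dvd_mul_right _ _)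

theorem X_pow_dvd_inv_qPochhammer_sub_one {a : ℕ} (ha : 0 < a) (n : ℕ) :
    X ^ a ∣ (qPochhammer K a n)⁻¹ - 1 := by
  have hinv : (qPochhammer K a n)⁻¹ * qPochhammer K a n = 1 :=
    PowerSeries.inv_mul_cancel _ (by rw [constantCoeff_qPochhammer ha]; exact one_ne_zero)
  have hsplit : (qPochhammer K a n)⁻¹ - 1 =
      -((qPochhammer K a n)⁻¹ * (qPochhammer K a n - 1)) := by
    linear_combination hinv
  rw [hsplit]
  exact ((X_pow_dvd_qPochhammer_sub_one a n).mul_left _).neg_right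

theorem one_sub_X_pow_mul_X_pow_mul_inv_qPochhammer {m : ℕ} (hm : 0 < m) (L : ℕ) :
    (1 - X ^ L) * (X ^ m * (qPochhammer K m (L + 1))⁻¹) =
      (qPochhammer K m L)⁻¹ - (qPochhammer K (m + 1) L)⁻¹ := by
  have hright : (qPochhammer K m L)⁻¹ = (1 - X ^ (m + L)) * (qPochhammer K m (L + 1))⁻¹ := by
    rw [qPochhammer_succ_right]
    exact inv_eq_mul_mul_inv (constantCoeff_one_sub_X_pow_ne_zero (by omega))
  have hleft : (qPochhammer K (m + 1) L)⁻¹ = (1 - X ^ m) * (qPochhammer K m (L + 1))⁻¹ := by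
    rw [qPochhammer_succ_left, mul_comm (1 - X ^ m) (qPochhammer K (m + 1) L)]
    exact inv_eq_mul_mul_inv (constantCoeff_one_sub_X_pow_ne_zero hm.ne')
  rw [hright, hleft]
  ring

end PowerSeries

namespace Nat.Partition

open scoped PowerSeries.WithPiTopology in
theorem powerSeriesMk_card_restricted_mul_prod {R : Type*} [CommRing R] (S : Finset ℕ)
    (hS : 0 ∉ S) :
    PowerSeries.mk (fun n ↦ (#(restricted n (· ∈ S)) : R)) * ∏ i ∈ S, (1 - X ^ i) = 1 := by
  -- Any T2 topology on `R` gives access to the infinite product formula; take the discrete one.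
  let _ : TopologicalSpace R := ⊥
  have _ : DiscreteTopology R := ⟨rfl⟩
  have hfin : HasProd (fun i ↦ if i + 1 ∈ S then (1 - X ^ (i + 1) : R⟦X⟧) else 1)
      (∏ i ∈ S, (1 - X ^ i)) := by
    have hinj : Set.InjOn (· + 1) ((· + 1) ⁻¹' (S : Set ℕ)) :=
      fun _ _ _ _ ↦ Nat.add_right_cancel
    rw [← prod_preimage (· + 1) S hinj _ fun i hi hr ↦ (hr ⟨i - 1, by grind⟩).elim]
    have h := hasProd_prod_of_ne_finset_one (L := .unconditional ℕ)
      (s := S.preimage (· + 1) hinj)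
      (f := fun i ↦ if i + 1 ∈ S then (1 - X ^ (i + 1) : R⟦X⟧) else 1)
      fun i hi ↦ if_neg (by simpa using hi)
    rwa [prod_congr rfl fun i hi ↦ if_pos (mem_preimage.1 hi)] at h
  refine ((hasProd_powerSeriesMk_card_restricted R (· ∈ S)).mul hfin).unique
    (hasProd_one.congr_fun fun i ↦ ?_)
  split_ifs
  · simp_rw [pow_mul]
    exact WithPiTopology.tsum_pow_mul_one_sub_of_constantCoeff_eq_zero
      (f := (X : R⟦X⟧) ^ (i + 1)) (by simp)
  · rw [one_mul]

variable {K : Type*} [Field K]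

theorem powerSeriesMk_card_restricted_eq_inv_prod (S : Finset ℕ) (hS : 0 ∉ S) :
    PowerSeries.mk (fun n ↦ (#(restricted n (· ∈ S)) : K)) =
      (∏ i ∈ S, (1 - X ^ i))⁻¹ := by
  rw [eq_inv_iff_mul_eq_one (by rw [constantCoeff_prod_one_sub_X_pow hS]; exact one_ne_zero)]
  exact powerSeriesMk_card_restricted_mul_prod S hS

theorem powerSeriesMk_card_restricted_Ico {a : ℕ} (ha : 0 < a) (n : ℕ) :
    PowerSeries.mk (fun k ↦ (#(restricted k (· ∈ Ico a (a + n))) : K)) =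
      (qPochhammer K a n)⁻¹ := by
  rw [qPochhammer_eq_prod_Ico]
  exact powerSeriesMk_card_restricted_eq_inv_prod _ (by simp; omega)

-- The spread of a partition is its largest part minus its smallest part.
def spreadLeMinEq (n m L : ℕ) : Finset n.Partition :=
  univ.filter fun p ↦ m ∈ p.parts ∧ ∀ j ∈ p.parts, m ≤ j ∧ j ≤ L + m

def spreadLeMinGe (n m L : ℕ) : Finset n.Partition :=
  univ.filter fun p ↦ p.parts ≠ 0 ∧ (∀ j ∈ p.parts, m ≤ j) ∧
    ∀ j ∈ p.parts, ∀ k ∈ p.parts, j ≤ k + L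

theorem card_spreadLeMinEq {n m : ℕ} (hm : 0 < m) (hmn : m ≤ n) (L : ℕ) :
    #(spreadLeMinEq n m L) = #(restricted (n - m) (· ∈ Ico m (m + (L + 1)))) := by
  let e := partitionWithPartEquiv hm hmn
  refine card_bij' (fun p hp ↦ e ⟨p, (mem_filter.1 hp).2.1⟩) (fun q _ ↦ (e.symm q).1)
    (fun p hp ↦ ?_) (fun q hq ↦ ?_) (fun p _ ↦ by simp [e]) (fun q _ ↦ by simp [e])
  · simp only [spreadLeMinEq, restricted, mem_filter, mem_univ, true_and, mem_Ico] at hp ⊢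
    intro j hj
    have := hp.2 j (Multiset.mem_of_mem_erase (by simpa [e] using hj))
    omega
  · simp only [spreadLeMinEq, restricted, mem_filter, mem_univ, true_and, mem_Ico] at hq ⊢
    simp only [e, partitionWithPartEquiv_symm_apply_parts, Multiset.mem_cons_self, true_and,
      Multiset.mem_cons, forall_eq_or_imp]
    exact ⟨by omega, fun j hj ↦ by have := hq j hj; omega⟩

theorem spreadLeMinEq_of_lt {n m : ℕ} (h : n < m) (L : ℕ) : spreadLeMinEq n m L = ∅ := by
  simp only [filter_eq_empty_iff, spreadLeMinEq]
  rintro p - ⟨hm, -⟩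
  exact absurd (le_of_mem_parts hm) (not_le.2 h)

theorem powerSeriesMk_card_spreadLeMinEq {m : ℕ} (hm : 0 < m) (L : ℕ) :
    PowerSeries.mk (fun n ↦ (#(spreadLeMinEq n m L) : K)) =
      X ^ m * (qPochhammer K m (L + 1))⁻¹ := by
  ext n
  rw [coeff_mk, coeff_X_pow_mul', ← powerSeriesMk_card_restricted_Ico hm, coeff_mk]
  split_ifs with hmn
  · rw [card_spreadLeMinEq hm hmn]
  · rw [spreadLeMinEq_of_lt (not_le.1 hmn), card_empty, Nat.cast_zero]

theorem card_spreadLeMinGe (n m L : ℕ) :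
    #(spreadLeMinGe n m L) = #(spreadLeMinEq n m L) + #(spreadLeMinGe n (m + 1) L) := by
  rw [← card_filter_add_card_filter_not (s := spreadLeMinGe n m L) (m ∈ ·.parts)]
  congr 2
  · ext p
    simp only [spreadLeMinGe, spreadLeMinEq, mem_filter, mem_univ, true_and]
    constructor
    · rintro ⟨⟨-, hge, hspread⟩, hmem⟩
      exact ⟨hmem, fun j hj ↦ ⟨hge j hj, by grind⟩⟩
    · rintro ⟨hmem, h⟩
      have hne : p.parts ≠ 0 := fun h0 ↦ by simp [h0] at hmem
      exact ⟨⟨hne, fun j hj ↦ (h j hj).1, fun j hj k hk ↦ by grind⟩, hmem⟩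
  · ext p
    simp only [spreadLeMinGe, mem_filter, mem_univ, true_and]
    constructor
    · rintro ⟨⟨hne, hge, hspread⟩, hmem⟩
      exact ⟨hne, fun j hj ↦ by grind, hspread⟩
    · rintro ⟨hne, hge, hspread⟩
      exact ⟨⟨hne, fun j hj ↦ by grind, hspread⟩, fun hmem ↦ by grind⟩

theorem spreadLeMinGe_of_lt {n m : ℕ} (h : n < m) (L : ℕ) : spreadLeMinGe n m L = ∅ := by
  simp only [filter_eq_empty_iff, spreadLeMinGe]
  rintro p - ⟨hne, hge, -⟩
  obtain ⟨j, hj⟩ := Multiset.exists_mem_of_ne_zero hne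
  exact absurd (hge j hj) (not_le.2 ((le_of_mem_parts hj).trans_lt h))

theorem one_sub_X_pow_mul_powerSeriesMk_card_spreadLeMinGe {m : ℕ} (hm : 0 < m) (L : ℕ) :
    (1 - X ^ L) * PowerSeries.mk (fun n ↦ (#(spreadLeMinGe n m L) : K)) =
      (qPochhammer K m L)⁻¹ - 1 := by
  set D : ℕ → K⟦X⟧ := fun m ↦
    (1 - X ^ L) * PowerSeries.mk (fun n ↦ (#(spreadLeMinGe n m L) : K)) -
      ((qPochhammer K m L)⁻¹ - 1)
  have hstep : ∀ m, 0 < m → D m = D (m + 1) := by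
    intro m hm
    have hsplit : PowerSeries.mk (fun n ↦ (#(spreadLeMinGe n m L) : K)) =
        PowerSeries.mk (fun n ↦ (#(spreadLeMinEq n m L) : K)) +
          PowerSeries.mk (fun n ↦ (#(spreadLeMinGe n (m + 1) L) : K)) := by
      ext n
      simp [card_spreadLeMinGe n m L]
    simp only [D, hsplit, mul_add, powerSeriesMk_card_spreadLeMinEq hm,
      one_sub_X_pow_mul_X_pow_mul_inv_qPochhammer hm]
    ring
  have hdvd : ∀ m, 0 < m → X ^ m ∣ D m := by
    intro m hm
    have hB : X ^ m ∣ PowerSeries.mk (fun n ↦ (#(spreadLeMinGe n m L) : K)) :=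
      X_pow_dvd_iff.2 fun n hn ↦ by simp [spreadLeMinGe_of_lt hn]
    exact (hB.mul_left _).sub (X_pow_dvd_inv_qPochhammer_sub_one hm L)
  have hshift : ∀ k, D m = D (m + k) := by
    intro k
    induction k with
    | zero => rfl
    | succ k ih => rw [ih, hstep _ (by omega), add_assoc]
  have hzero : D m = 0 := eq_zero_of_forall_X_pow_dvd fun k ↦
    (pow_dvd_pow X (Nat.le_add_left k m)).trans (by rw [hshift k]; exact hdvd (m + k) (by omega))
  exact sub_eq_zero.1 hzero

end Nat.Partition

open Nat.Partition

theorem stmt_10 (s L : ℕ) (hs : 0 < s) (hL : 0 < L) :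
    (PowerSeries.mk fun n =>
        ((Nat.card {p : Nat.Partition n //
            s ∈ p.parts ∧ ∀ j ∈ p.parts, s ≤ j ∧ j ≤ L + s} : ℤ) -
         (Nat.card {p : Nat.Partition n //
            p.parts ≠ 0 ∧ (∀ j ∈ p.parts, s + 1 ≤ j) ∧
              ∀ j ∈ p.parts, ∀ k ∈ p.parts, j ≤ k + L} : ℤ) : ℚ)) =
      (1 - (PowerSeries.X : PowerSeries ℚ) ^ L)⁻¹ *
        ((PowerSeries.X : PowerSeries ℚ) ^ s * (1 - (PowerSeries.X : PowerSeries ℚ) ^ L) *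
            (∏ i ∈ Finset.range (L + 1), (1 - (PowerSeries.X : PowerSeries ℚ) ^ (s + i)))⁻¹ -
          ((∏ i ∈ Finset.range L, (1 - (PowerSeries.X : PowerSeries ℚ) ^ (s + 1 + i)))⁻¹ - 1)) := by
  have hcount : (PowerSeries.mk fun n =>
        ((Nat.card {p : Nat.Partition n //
            s ∈ p.parts ∧ ∀ j ∈ p.parts, s ≤ j ∧ j ≤ L + s} : ℤ) -
         (Nat.card {p : Nat.Partition n //
            p.parts ≠ 0 ∧ (∀ j ∈ p.parts, s + 1 ≤ j) ∧
              ∀ j ∈ p.parts, ∀ k ∈ p.parts, j ≤ k + L} : ℤ) : ℚ)) =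
      PowerSeries.mk (fun n ↦ (#(spreadLeMinEq n s L) : ℚ)) -
        PowerSeries.mk (fun n ↦ (#(spreadLeMinGe n (s + 1) L) : ℚ)) := by
    ext n
    simp [spreadLeMinEq, spreadLeMinGe, Nat.card_eq_fintype_card, Fintype.card_subtype]
  have hunit : (1 - X ^ L : ℚ⟦X⟧)⁻¹ * (1 - X ^ L) = 1 :=
    PowerSeries.inv_mul_cancel _ (constantCoeff_one_sub_X_pow_ne_zero hL.ne')
  change _ = _ * (_ * _ * (qPochhammer ℚ s (L + 1))⁻¹ - ((qPochhammer ℚ (s + 1) L)⁻¹ - 1))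
  rw [hcount, powerSeriesMk_card_spreadLeMinEq hs,
    ← one_sub_X_pow_mul_powerSeriesMk_card_spreadLeMinGe s.succ_pos]
  linear_combination (PowerSeries.mk (fun n ↦ (#(spreadLeMinGe n (s + 1) L) : ℚ)) -
    X ^ s * (qPochhammer ℚ s (L + 1))⁻¹) * hunit
end

section
/- For every N ≥ 67, the number of partitions of N with smallest part 3, all parts at most 9, and no part equal to 6 is at least the number of nonempty partitions of N with all parts in {4, 5, 6, 7, 8, 9}. -/
/-!
Record a partition with parts in {4, …, 9} by the multiplicities (k, a, b, c, d, e) of its parts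
6, 4, 5, 7, 8, 9, and a partition with parts in {3, 4, 5, 7, 8, 9} by the multiplicities
(m, a, b, c, d, e) of 3, 4, 5, 7, 8, 9. Each 6 can be split into 3 + 3; if there is no 6, a
small block of parts is traded for parts 3 (and possibly some 5s) of the same total, namely the
first applicable one among 8 = 3 + 5, 9 = 3·3, 4·2 + 7 = 3·5, 7·3 = 3·7, 5·4 + 7 = 3·9,
4·2 + 5·5 = 3·11, 5·9 = 3·15, 4·11 = 3·13 + 5, 4·15 = 3·15 + 5·3. The resulting number m of 3s
is even exactly in the first case and otherwise identifies the trade (for m = 15, by whether at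
least two 4s remain), so the map is injective; N ≥ 67 guarantees that the block being traded is
present whenever the earlier trades do not apply.
-/

open Multiset

abbrev Mult6 := ℕ × ℕ × ℕ × ℕ × ℕ × ℕ

def otherParts : Finset ℕ := {4, 5, 7, 8, 9}

def weight (x : ℕ) : Mult6 → ℕ
  | (k, a, b, c, d, e) => x * k + 4 * a + 5 * b + 7 * c + 8 * d + 9 * e

def counts (x : ℕ) (s : Multiset ℕ) : Mult6 :=
  (s.count x, s.count 4, s.count 5, s.count 7, s.count 8, s.count 9)

def ofCounts (x : ℕ) : Mult6 → Multiset ℕ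
  | (k, a, b, c, d, e) =>
    replicate k x + replicate a 4 + replicate b 5 + replicate c 7 + replicate d 8 + replicate e 9

section Counts

variable {x : ℕ}

lemma mem_ofCounts {v : Mult6} {j : ℕ} (hj : j ∈ ofCounts x v) : j = x ∨ j ∈ otherParts := by
  obtain ⟨k, a, b, c, d, e⟩ := v
  simp only [ofCounts, otherParts, mem_add, mem_replicate, Finset.mem_insert,
    Finset.mem_singleton] at hj ⊢
  omega

lemma self_mem_ofCounts {v : Mult6} (hv : 0 < v.1) : x ∈ ofCounts x v := by
  obtain ⟨k, a, b, c, d, e⟩ := v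
  simp_all [ofCounts, mem_replicate, Nat.pos_iff_ne_zero]

lemma sum_ofCounts (v : Mult6) : (ofCounts x v).sum = weight x v := by
  obtain ⟨k, a, b, c, d, e⟩ := v
  simp only [ofCounts, weight, sum_add, sum_replicate, smul_eq_mul]
  ring

lemma counts_ofCounts (hx : x ∉ otherParts) (v : Mult6) :
    counts x (ofCounts x v) = v := by
  obtain ⟨k, a, b, c, d, e⟩ := v
  simp only [otherParts, Finset.mem_insert, Finset.mem_singleton, not_or] at hx
  simp [counts, ofCounts, count_replicate, hx, Ne.symm hx.1, Ne.symm hx.2.1, Ne.symm hx.2.2.1,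
    Ne.symm hx.2.2.2.1, Ne.symm hx.2.2.2.2]

lemma ofCounts_counts (hx : x ∉ otherParts) {s : Multiset ℕ}
    (hs : ∀ j ∈ s, j = x ∨ j ∈ otherParts) :
    ofCounts x (counts x s) = s := by
  simp only [otherParts, Finset.mem_insert, Finset.mem_singleton] at hx hs
  ext n
  simp only [ofCounts, counts, count_add, count_replicate]
  split_ifs <;> subst_vars <;> simp_all [eq_comm (a := 0), count_eq_zero]
  exact fun hn => by have := hs n hn; omega

lemma weight_counts (hx : x ∉ otherParts) {s : Multiset ℕ}
    (hs : ∀ j ∈ s, j = x ∨ j ∈ otherParts) : weight x (counts x s) = s.sum := by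
  rw [← sum_ofCounts, ofCounts_counts hx hs]

end Counts

def toThrees : Mult6 → Mult6
  | (k, a, b, c, d, e) =>
    if 0 < k then (2 * k, a, b, c, d, e)
    else if 0 < d then (1, a, b + 1, c, d - 1, e)
    else if 0 < e then (3, a, b, c, d, e - 1)
    else if 0 < c then
      if 2 ≤ a then (5, a - 2, b, c - 1, d, e)
      else if 3 ≤ c then (7, a, b, c - 3, d, e)
      else (9, a, b - 4, c - 1, d, e)
    else if 5 ≤ b then
      if 2 ≤ a then (11, a - 2, b - 5, c, d, e)
      else (15, a, b - 9, c, d, e)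
    else if 0 < b then (13, a - 11, b + 1, c, d, e)
    else (15, a - 15, b + 3, c, d, e)

def ofThrees : Mult6 → Mult6
  | (m, a, b, c, d, e) =>
    if m = 1 then (0, a, b - 1, c, d + 1, e)
    else if m = 3 then (0, a, b, c, d, e + 1)
    else if m = 5 then (0, a + 2, b, c + 1, d, e)
    else if m = 7 then (0, a, b, c + 3, d, e)
    else if m = 9 then (0, a, b + 4, c + 1, d, e)
    else if m = 11 then (0, a + 2, b + 5, c, d, e)
    else if m = 13 then (0, a + 11, b - 1, c, d, e)
    else if m = 15 then
      if 2 ≤ a then (0, a + 15, b - 3, c, d, e) else (0, a, b + 9, c, d, e)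
    else (m / 2, a, b, c, d, e)

lemma fst_toThrees_pos (v : Mult6) : 0 < (toThrees v).1 := by
  obtain ⟨k, a, b, c, d, e⟩ := v
  simp only [toThrees]
  split_ifs <;> simp only <;> omega

lemma weight_toThrees {v : Mult6} (hv : 67 ≤ weight 6 v) : weight 3 (toThrees v) = weight 6 v := by
  obtain ⟨k, a, b, c, d, e⟩ := v
  simp only [weight] at hv
  simp only [toThrees]
  split_ifs <;> simp only [weight] <;> omega

lemma ofThrees_toThrees {v : Mult6} (hv : 67 ≤ weight 6 v) : ofThrees (toThrees v) = v := by
  obtain ⟨k, a, b, c, d, e⟩ := v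
  simp only [weight] at hv
  simp only [toThrees]
  split_ifs <;>
    simp (disch := omega) only [ofThrees, if_pos, if_neg, reduceIte, Prod.mk.injEq, and_true,
      true_and] <;>
    omega

section Exchange

variable {N : ℕ}

def threesPartition (v : Mult6) (hv : weight 3 v = N) : Nat.Partition N where
  parts := ofCounts 3 v
  parts_pos hj := by have := mem_ofCounts hj; simp [otherParts] at this; omega
  parts_sum := (sum_ofCounts v).trans hv

lemma threesPartition_parts_spec {v : Mult6} {hv : weight 3 v = N} (hv₀ : 0 < v.1) :
    3 ∈ (threesPartition v hv).parts ∧ (∀ j ∈ (threesPartition v hv).parts, 3 ≤ j ∧ j ≤ 9) ∧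
      6 ∉ (threesPartition v hv).parts := by
  refine ⟨self_mem_ofCounts hv₀, fun j hj => ?_, fun h6 => ?_⟩
  · have := mem_ofCounts hj; simp [otherParts] at this; omega
  · have := mem_ofCounts h6; simp [otherParts] at this

variable (N) in
abbrev PartsIcc49 := {p : Nat.Partition N // ∀ j ∈ p.parts, 4 ≤ j ∧ j ≤ 9}

lemma PartsIcc49.mem_six_or (p : PartsIcc49 N) :
    ∀ j ∈ p.1.parts, j = 6 ∨ j ∈ otherParts := by
  intro j hj
  have := p.2 j hj
  simp only [otherParts, Finset.mem_insert, Finset.mem_singleton]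
  omega

lemma PartsIcc49.weight_counts (p : PartsIcc49 N) : weight 6 (counts 6 p.1.parts) = N := by
  rw [_root_.weight_counts (by decide) p.mem_six_or, p.1.parts_sum]

def exchange (hN : 67 ≤ N) (p : PartsIcc49 N) :
    {p : Nat.Partition N // 3 ∈ p.parts ∧ (∀ j ∈ p.parts, 3 ≤ j ∧ j ≤ 9) ∧ 6 ∉ p.parts} :=
  ⟨threesPartition (toThrees (counts 6 p.1.parts))
      ((weight_toThrees (hN.trans_eq p.weight_counts.symm)).trans p.weight_counts),
    threesPartition_parts_spec (fst_toThrees_pos _)⟩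

lemma exchange_injective (hN : 67 ≤ N) : Function.Injective (exchange hN) := by
  intro p q hpq
  have hthrees : toThrees (counts 6 p.1.parts) = toThrees (counts 6 q.1.parts) := by
    have := congrArg (fun r => counts 3 r.1.parts) hpq
    simpa only [exchange, threesPartition, counts_ofCounts (x := 3) (by decide)] using this
  have hcounts : counts 6 p.1.parts = counts 6 q.1.parts := by
    have := congrArg ofThrees hthrees
    rwa [ofThrees_toThrees (hN.trans_eq p.weight_counts.symm),
      ofThrees_toThrees (hN.trans_eq q.weight_counts.symm)] at this
  refine Subtype.ext (Nat.Partition.ext ?_)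
  rw [← ofCounts_counts (by decide) p.mem_six_or, hcounts, ofCounts_counts (by decide) q.mem_six_or]

end Exchange

theorem stmt_12 (N : ℕ) (hN : 67 ≤ N) :
    Nat.card {p : Nat.Partition N //
        p.parts ≠ 0 ∧ ∀ j ∈ p.parts, 4 ≤ j ∧ j ≤ 9} ≤
      Nat.card {p : Nat.Partition N //
        3 ∈ p.parts ∧ (∀ j ∈ p.parts, 3 ≤ j ∧ j ≤ 9) ∧ 6 ∉ p.parts} :=
  Nat.card_le_card_of_injective _ <|
    (exchange_injective hN).comp (Subtype.map_injective (fun _ hp => hp.2) Function.injective_id)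
end

section
/- For every N ≥ 164, the number of partitions of N with smallest part 3, all parts at most 8, and no part equal to 5 is at least the number of nonempty partitions of N with all parts in {4, 5, 6, 7, 8}. -/
open Multiset

/-- forward map on count-tuples `(a,b,c,d,e)` = counts of parts 4,5,6,7,8.
Output `(t,a',c',d',e')` = counts of parts 3,4,6,7,8 with
`3t+4a'+6c'+7d'+8e' = 4a+5b+6c+7d+8e` and `t ≥ 1`. -/
def Ff (a b c d e : ℕ) : ℕ × ℕ × ℕ × ℕ × ℕ :=
    if 2 ≤ b then ((5 * b - 4 * (2 * b % 3)) / 3, a + 2 * b % 3, c, d, e)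
    else if b = 1 then
      if 1 ≤ a then (3, a - 1, c, d, e)
      else if 1 ≤ c then (1, 0, c - 1, d, e + 1)
      else if 5 ≤ d then (11, 0, 0, d - 4, e)
      else (23, 0, 0, d, e - 8)
    else
      if 1 ≤ d then (1, a + 1, c, d - 1, e)
      else if 3 ≤ c then (6, a, c - 3, d, e)
      else if 6 ≤ a then (8, a - 6, c, d, e)
      else (16, a, c, d, e - 6)

/-- decoder (left inverse of `Ff`). -/
def Gg (t a c d e : ℕ) : ℕ × ℕ × ℕ × ℕ × ℕ :=
    if t % 5 = 0 then (a, 3 * (t / 5), c, d, e)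
    else if t % 5 = 4 then (a - 2, 3 * ((t + 1) / 5) + 1, c, d, e)
    else if t % 5 = 2 then (a - 1, 3 * ((t - 2) / 5) + 2, c, d, e)
    else if t = 1 then (if 1 ≤ a then (a - 1, 0, c, d + 1, e) else (0, 1, c + 1, d, e - 1))
    else if t = 3 then (a + 1, 1, c, d, e)
    else if t = 6 then (a, 0, c + 3, d, e)
    else if t = 8 then (a + 6, 0, c, d, e)
    else if t = 11 then (0, 1, 0, d + 4, e)
    else if t = 16 then (a, 0, c, d, e + 6)
    else (0, 1, 0, d, e + 8)

lemma Ff_sum (a b c d e N : ℕ) (hN : 164 ≤ N)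
    (h : 4 * a + 5 * b + 6 * c + 7 * d + 8 * e = N) :
    3 * (Ff a b c d e).1 + 4 * (Ff a b c d e).2.1 +
      6 * (Ff a b c d e).2.2.1 + 7 * (Ff a b c d e).2.2.2.1 +
      8 * (Ff a b c d e).2.2.2.2 = N := by
  unfold Ff
  split_ifs <;> simp <;> omega

lemma Ff_pos (a b c d e : ℕ) : 1 ≤ (Ff a b c d e).1 := by
  unfold Ff
  split_ifs <;> simp <;> omega

set_option maxHeartbeats 2000000 in
lemma Gg_Ff (a b c d e N : ℕ) (hN : 164 ≤ N)
    (h : 4 * a + 5 * b + 6 * c + 7 * d + 8 * e = N) :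
    Gg (Ff a b c d e).1 (Ff a b c d e).2.1 (Ff a b c d e).2.2.1 (Ff a b c d e).2.2.2.1 (Ff a b c d e).2.2.2.2 = (a, b, c, d, e) := by
  by_cases h1 : 2 ≤ b
  · obtain ⟨j, hj⟩ : ∃ j, b = 3*j ∨ b = 3*j+1 ∨ b = 3*j+2 := ⟨b/3, by omega⟩
    unfold Ff
    rw [if_pos h1]
    dsimp only
    rcases hj with hj | hj | hj <;> subst hj
    · have e1 : 2*(3*j)%3 = 0 := by omega
      have e2 : (5*(3*j) - 4*0)/3 = 5*j := by omega
      rw [e1, e2]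
      unfold Gg
      split_ifs <;> simp only [Prod.mk.injEq, and_true, true_and] <;> omega
    · have e1 : 2*(3*j+1)%3 = 2 := by omega
      have e2 : (5*(3*j+1) - 4*2)/3 = 5*j - 1 := by omega
      rw [e1, e2]
      unfold Gg
      split_ifs <;> simp only [Prod.mk.injEq, and_true, true_and] <;> omega
    · have e1 : 2*(3*j+2)%3 = 1 := by omega
      have e2 : (5*(3*j+2) - 4*1)/3 = 5*j + 2 := by omega
      rw [e1, e2]
      unfold Gg
      split_ifs <;> simp only [Prod.mk.injEq, and_true, true_and] <;> omega
  · unfold Ff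
    rw [if_neg h1]
    split_ifs with h2 h3 h4 h5 h6 h7 h8 <;>
      · simp only [Gg]
        norm_num [Prod.mk.injEq]
        all_goals omega

/-- build a multiset from counts of 3,4,6,7,8 -/
def mk5 (t a c d e : ℕ) : Multiset ℕ :=
  replicate t 3 + replicate a 4 + replicate c 6 + replicate d 7 + replicate e 8

lemma mk5_count (t a c d e : ℕ) :
    (mk5 t a c d e).count 3 = t ∧ (mk5 t a c d e).count 4 = a ∧
    (mk5 t a c d e).count 6 = c ∧ (mk5 t a c d e).count 7 = d ∧
    (mk5 t a c d e).count 8 = e := by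
  simp [mk5, count_replicate]

lemma mk5_sum (t a c d e : ℕ) :
    (mk5 t a c d e).sum = 3 * t + 4 * a + 6 * c + 7 * d + 8 * e := by
  simp [mk5, sum_replicate]
  ring

lemma mk5_mem {t a c d e j : ℕ} (hj : j ∈ mk5 t a c d e) :
    j = 3 ∨ j = 4 ∨ j = 6 ∨ j = 7 ∨ j = 8 := by
  simp only [mk5, mem_add] at hj
  rcases hj with ((((h | h) | h) | h) | h) <;>
    simp [eq_of_mem_replicate h]

lemma rebuild (s : Multiset ℕ) (h : ∀ j ∈ s, 4 ≤ j ∧ j ≤ 8) :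
    s = replicate (s.count 4) 4 + replicate (s.count 5) 5 + replicate (s.count 6) 6 +
        replicate (s.count 7) 7 + replicate (s.count 8) 8 := by
  ext n
  simp only [count_add, count_replicate]
  by_cases hn : n ∈ s
  · obtain ⟨hl, hr⟩ := h n hn
    interval_cases n <;> simp
  · rw [count_eq_zero_of_notMem hn]
    split_ifs <;> simp_all [count_eq_zero_of_notMem]

lemma count_sum (s : Multiset ℕ) (h : ∀ j ∈ s, 4 ≤ j ∧ j ≤ 8) :
    s.sum = 4 * s.count 4 + 5 * s.count 5 + 6 * s.count 6 +
      7 * s.count 7 + 8 * s.count 8 := by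
  conv_lhs => rw [rebuild s h]
  simp [sum_replicate]
  ring

/-- the injection on partitions -/
def Phi (N : ℕ) (hN : 164 ≤ N)
    (p : {p : Nat.Partition N // p.parts ≠ 0 ∧ ∀ j ∈ p.parts, 4 ≤ j ∧ j ≤ 8}) :
    {p : Nat.Partition N // 3 ∈ p.parts ∧ (∀ j ∈ p.parts, 3 ≤ j ∧ j ≤ 8) ∧ 5 ∉ p.parts} := by
  refine ⟨⟨mk5 (Ff (p.1.parts.count 4) (p.1.parts.count 5) (p.1.parts.count 6) (p.1.parts.count 7) (p.1.parts.count 8)).1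
      (Ff (p.1.parts.count 4) (p.1.parts.count 5) (p.1.parts.count 6) (p.1.parts.count 7) (p.1.parts.count 8)).2.1
      (Ff (p.1.parts.count 4) (p.1.parts.count 5) (p.1.parts.count 6) (p.1.parts.count 7) (p.1.parts.count 8)).2.2.1
      (Ff (p.1.parts.count 4) (p.1.parts.count 5) (p.1.parts.count 6) (p.1.parts.count 7) (p.1.parts.count 8)).2.2.2.1
      (Ff (p.1.parts.count 4) (p.1.parts.count 5) (p.1.parts.count 6) (p.1.parts.count 7) (p.1.parts.count 8)).2.2.2.2, ?_, ?_⟩, ?_, ?_, ?_⟩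
  · intro i hi
    have := mk5_mem hi
    omega
  · rw [mk5_sum]
    have hs : 4 * p.1.parts.count 4 + 5 * p.1.parts.count 5 + 6 * p.1.parts.count 6 +
        7 * p.1.parts.count 7 + 8 * p.1.parts.count 8 = N := by
      have := p.1.parts_sum
      rw [count_sum p.1.parts p.2.2] at this
      omega
    have := Ff_sum _ _ _ _ _ N hN hs
    omega
  · have := Ff_pos (p.1.parts.count 4) (p.1.parts.count 5) (p.1.parts.count 6)
      (p.1.parts.count 7) (p.1.parts.count 8)
    simp only [mk5, mem_add]
    left; left; left; left
    exact mem_replicate.2 ⟨by omega, rfl⟩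
  · intro j hj
    have := mk5_mem hj
    omega
  · intro hj
    have := mk5_mem hj
    omega

theorem stmt_13 (N : ℕ) (hN : 164 ≤ N) :
    Nat.card {p : Nat.Partition N //
        p.parts ≠ 0 ∧ ∀ j ∈ p.parts, 4 ≤ j ∧ j ≤ 8} ≤
      Nat.card {p : Nat.Partition N //
        3 ∈ p.parts ∧ (∀ j ∈ p.parts, 3 ≤ j ∧ j ≤ 8) ∧ 5 ∉ p.parts} := by
  classical
  refine Nat.card_le_card_of_injective (Phi N hN) ?_
  intro p q hpq
  have hparts : (Phi N hN p).1.parts = (Phi N hN q).1.parts := by rw [hpq]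
  -- extract equality of Ff outputs via counts
  set fp := Ff (p.1.parts.count 4) (p.1.parts.count 5) (p.1.parts.count 6) (p.1.parts.count 7) (p.1.parts.count 8) with hfp
  set fq := Ff (q.1.parts.count 4) (q.1.parts.count 5) (q.1.parts.count 6) (q.1.parts.count 7) (q.1.parts.count 8) with hfq
  have hmk : mk5 fp.1 fp.2.1 fp.2.2.1 fp.2.2.2.1 fp.2.2.2.2 =
      mk5 fq.1 fq.2.1 fq.2.2.1 fq.2.2.2.1 fq.2.2.2.2 := hparts
  have hFeq : fp = fq := by
    obtain ⟨c3p, c4p, c6p, c7p, c8p⟩ := mk5_count fp.1 fp.2.1 fp.2.2.1 fp.2.2.2.1 fp.2.2.2.2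
    obtain ⟨c3q, c4q, c6q, c7q, c8q⟩ := mk5_count fq.1 fq.2.1 fq.2.2.1 fq.2.2.2.1 fq.2.2.2.2
    have e3 := congrArg (Multiset.count 3) hmk
    have e4 := congrArg (Multiset.count 4) hmk
    have e6 := congrArg (Multiset.count 6) hmk
    have e7 := congrArg (Multiset.count 7) hmk
    have e8 := congrArg (Multiset.count 8) hmk
    rw [c3p, c3q] at e3
    rw [c4p, c4q] at e4
    rw [c6p, c6q] at e6
    rw [c7p, c7q] at e7
    rw [c8p, c8q] at e8
    exact Prod.ext e3 (Prod.ext e4 (Prod.ext e6 (Prod.ext e7 e8)))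
  have hsp : 4 * p.1.parts.count 4 + 5 * p.1.parts.count 5 + 6 * p.1.parts.count 6 +
      7 * p.1.parts.count 7 + 8 * p.1.parts.count 8 = N := by
    have := p.1.parts_sum
    rw [count_sum p.1.parts p.2.2] at this
    omega
  have hsq : 4 * q.1.parts.count 4 + 5 * q.1.parts.count 5 + 6 * q.1.parts.count 6 +
      7 * q.1.parts.count 7 + 8 * q.1.parts.count 8 = N := by
    have := q.1.parts_sum
    rw [count_sum q.1.parts q.2.2] at this
    omega
  have hGp := Gg_Ff (p.1.parts.count 4) (p.1.parts.count 5) (p.1.parts.count 6)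
      (p.1.parts.count 7) (p.1.parts.count 8) N hN hsp
  have hGq := Gg_Ff (q.1.parts.count 4) (q.1.parts.count 5) (q.1.parts.count 6)
      (q.1.parts.count 7) (q.1.parts.count 8) N hN hsq
  rw [← hfp] at hGp
  rw [← hfq] at hGq
  have hcounts : (p.1.parts.count 4, p.1.parts.count 5, p.1.parts.count 6,
      p.1.parts.count 7, p.1.parts.count 8) =
      (q.1.parts.count 4, q.1.parts.count 5, q.1.parts.count 6,
      q.1.parts.count 7, q.1.parts.count 8) := by
    rw [← hGp, ← hGq, hFeq]
  have e4 : p.1.parts.count 4 = q.1.parts.count 4 := congrArg (·.1) hcounts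
  have e5 : p.1.parts.count 5 = q.1.parts.count 5 := congrArg (·.2.1) hcounts
  have e6 : p.1.parts.count 6 = q.1.parts.count 6 := congrArg (·.2.2.1) hcounts
  have e7 : p.1.parts.count 7 = q.1.parts.count 7 := congrArg (·.2.2.2.1) hcounts
  have e8 : p.1.parts.count 8 = q.1.parts.count 8 := congrArg (·.2.2.2.2) hcounts
  have : p.1.parts = q.1.parts := by
    rw [rebuild p.1.parts p.2.2, rebuild q.1.parts q.2.2, e4, e5, e6, e7, e8]
  exact Subtype.ext (Nat.Partition.ext this)
end

section
/- For every N ≥ 1042, the number of partitions of N with smallest part 3, all parts at most 7, and no part equal to 4 is at least the number of nonempty partitions of N with all parts in {4, 5, 6, 7}. -/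
namespace Stmt14

open Multiset

/-- forward map on count quadruples `(a,b,c,d)` (counts of parts 4,5,6,7)
to `(x,B,C,D)` (counts of parts 3,5,6,7). -/
def fmap (N a b c d : ℕ) : ℕ × ℕ × ℕ × ℕ :=
    if 3 ≤ a then ((4*a - 7*(a%3))/3, b, c, d + a%3)
    else if a = 0 then
      if 27 ≤ b then (45, b-27, c, d)
      else if 1 ≤ c ∧ 3 ≤ d then (9, b, c-1, d-3)
      else if 3 ≤ b ∧ d ≤ 2 ∧ 14 ≤ c then (33, b-3, c-14, d)
      else if 21 ≤ d then (49, b, c, d-21)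
      else (77+12*b+4*d,
        ((N-3*(77+12*b+4*d)) - 6*((N-3*(77+12*b+4*d))%5))/5,
        (N-3*(77+12*b+4*d))%5, 0)
    else if a = 1 then
      if 5 ≤ d then (13, b, c, d-5)
      else if 1 ≤ b ∧ 25 ≤ c then (53, b-1, c-25, d)
      else if 43 ≤ b then (73, b-43, c, d)
      else (113+4*d,
        ((N-3*(113+4*d)) - 6*((N-3*(113+4*d))%5))/5,
        (N-3*(113+4*d))%5, 0)
    else
      if 1 ≤ d then (5, b, c, d-1)
      else if 5 ≤ b ∧ 3 ≤ c then (17, b-5, c-3, d)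
      else if 11 ≤ b then (21, b-11, c, d)
      else (133+4*b,
        ((N-3*(133+4*b)) - 6*((N-3*(133+4*b))%5))/5,
        (N-3*(133+4*b))%5, 0)

/-- decoding (left inverse) map. -/
def gmap (N x B C D : ℕ) : ℕ × ℕ × ℕ × ℕ :=
    if x % 4 = 0 then (3*(x/4), B, C, D)
    else if x % 4 = 3 then (3*((x+1)/4)+1, B, C, D-1)
    else if x % 4 = 2 then (3*((x+2)/4)+2, B, C, D-2)
    else
      if x/4 = 11 then (0, B+27, C, D)
      else if x/4 = 2 then (0, B, C+1, D+3)
      else if x/4 = 8 then (0, B+3, C+14, D)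
      else if x/4 = 12 then (0, B, C, D+21)
      else if x/4 = 3 then (1, B, C, D+5)
      else if x/4 = 13 then (1, B+1, C+25, D)
      else if x/4 = 18 then (1, B+43, C, D)
      else if x/4 = 4 then (2, B+5, C+3, D)
      else if x/4 = 5 then (2, B+11, C, D)
      else if x/4 = 1 then (2, B, C, D+1)
      else if 19 ≤ x/4 ∧ x/4 ≤ 27 then
        (0, (x/4-19)/3, (N - 5*((x/4-19)/3) - 7*((x/4-19)%3))/6, (x/4-19)%3)
      else if 28 ≤ x/4 ∧ x/4 ≤ 32 then
        (1, 0, (N - 4 - 7*(x/4-28))/6, x/4-28)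
      else if 33 ≤ x/4 ∧ x/4 ≤ 37 then
        (2, x/4-33, (N - 8 - 5*(x/4-33))/6, 0)
      else (0,0,0,0)

lemma gmap0 (N x B C D : ℕ) (h : x % 4 = 0) : gmap N x B C D = (3*(x/4), B, C, D) := by
  unfold gmap; rw [if_pos h]

lemma gmap3 (N x B C D : ℕ) (h : x % 4 = 3) :
    gmap N x B C D = (3*((x+1)/4)+1, B, C, D-1) := by
  unfold gmap; rw [if_neg (by omega), if_pos h]

lemma gmap2 (N x B C D : ℕ) (h : x % 4 = 2) :
    gmap N x B C D = (3*((x+2)/4)+2, B, C, D-2) := by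
  unfold gmap; rw [if_neg (by omega), if_neg (by omega), if_pos h]

set_option maxHeartbeats 1000000 in
lemma key (N a b c d x B C D : ℕ) (hN : 1042 ≤ N)
    (hsum : 4*a+5*b+6*c+7*d = N)
    (hf : fmap N a b c d = (x,B,C,D)) :
    1 ≤ x ∧ 3*x+5*B+6*C+7*D = N ∧ gmap N x B C D = (a,b,c,d) := by
  simp only [fmap] at hf
  split_ifs at hf with h1 h2 h3 h4 h5 h6 h7 h8 h9 h10 h11 h12 h13 <;>
    (simp only [Prod.mk.injEq] at hf; obtain ⟨hx, hB, hC, hD⟩ := hf) <;>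
    refine ⟨by omega, by omega, ?_⟩
  -- main branch : a ≥ 3
  · have hr : a % 3 = 0 ∨ a % 3 = 1 ∨ a % 3 = 2 := by omega
    rcases hr with hr|hr|hr
    · rw [gmap0 N x B C D (by omega)]; simp only [Prod.mk.injEq]; omega
    · rw [gmap3 N x B C D (by omega)]; simp only [Prod.mk.injEq]; omega
    · rw [gmap2 N x B C D (by omega)]; simp only [Prod.mk.injEq]; omega
  -- a = 0 gadgets
  · subst hx; norm_num [gmap]; omega
  · subst hx; norm_num [gmap]; omega
  · subst hx; norm_num [gmap]; omega
  · subst hx; norm_num [gmap]; omega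
  -- a = 0 special
  · have hb : b ≤ 2 := by omega
    have hd : d ≤ 2 := by omega
    interval_cases b <;> interval_cases d <;>
      (norm_num at hx; subst hx; norm_num [gmap]; omega)
  -- a = 1 gadgets
  · subst hx; norm_num [gmap]; omega
  · subst hx; norm_num [gmap]; omega
  · subst hx; norm_num [gmap]; omega
  -- a = 1 special
  · have hb : b = 0 := by omega
    have hd : d ≤ 4 := by omega
    subst hb
    interval_cases d <;> (norm_num at hx; subst hx; norm_num [gmap]; omega)
  -- a = 2 gadgets
  · subst hx; norm_num [gmap]; omega
  · subst hx; norm_num [gmap]; omega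
  · subst hx; norm_num [gmap]; omega
  -- a = 2 special
  · have hb : b ≤ 4 := by omega
    have hd : d = 0 := by omega
    subst hd
    interval_cases b <;> (norm_num at hx; subst hx; norm_num [gmap]; omega)

lemma decomp (s : Multiset ℕ) (h : ∀ j ∈ s, 4 ≤ j ∧ j ≤ 7) :
    s = replicate (count 4 s) 4 + replicate (count 5 s) 5 +
        replicate (count 6 s) 6 + replicate (count 7 s) 7 := by
  ext j
  simp only [count_add, count_replicate]
  by_cases h4 : j = 4
  · subst h4; simp
  by_cases h5 : j = 5
  · subst h5; simp
  by_cases h6 : j = 6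
  · subst h6; simp
  by_cases h7 : j = 7
  · subst h7; simp
  have hj : j ∉ s := fun hj => by have := h j hj; omega
  rw [count_eq_zero.mpr hj]
  simp [Ne.symm h4, Ne.symm h5, Ne.symm h6, Ne.symm h7, h4, h5, h6, h7]

lemma sum_mk (x b c d : ℕ) :
    (replicate x 3 + replicate b 5 + replicate c 6 + replicate d 7).sum
      = 3*x+5*b+6*c+7*d := by
  simp [Multiset.sum_replicate, smul_eq_mul]; ring

def mk3 (N x b c d : ℕ) (h : 3*x+5*b+6*c+7*d = N) : Nat.Partition N where
  parts := replicate x 3 + replicate b 5 + replicate c 6 + replicate d 7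
  parts_pos := by
    intro i hi
    simp only [mem_add, mem_replicate] at hi
    rcases hi with ((⟨_,h⟩|⟨_,h⟩)|⟨_,h⟩)|⟨_,h⟩ <;> omega
  parts_sum := by rw [sum_mk]; exact h

lemma counts_mk (x b c d : ℕ) :
    count 3 (replicate x 3 + replicate b 5 + replicate c 6 + replicate d 7) = x ∧
    count 5 (replicate x 3 + replicate b 5 + replicate c 6 + replicate d 7) = b ∧
    count 6 (replicate x 3 + replicate b 5 + replicate c 6 + replicate d 7) = c ∧
    count 7 (replicate x 3 + replicate b 5 + replicate c 6 + replicate d 7) = d := by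
  refine ⟨?_, ?_, ?_, ?_⟩ <;> simp [count_replicate]

lemma mem3 {x b c d : ℕ} (hx : 1 ≤ x) :
    3 ∈ replicate x 3 + replicate b 5 + replicate c 6 + replicate d 7 := by
  have h3 : (3:ℕ) ∈ replicate x 3 := mem_replicate.mpr ⟨by omega, rfl⟩
  simp only [mem_add]
  tauto

lemma bound3 (x b c d : ℕ) :
    ∀ j ∈ replicate x 3 + replicate b 5 + replicate c 6 + replicate d 7,
      3 ≤ j ∧ j ≤ 7 := by
  intro j hj
  simp only [mem_add, mem_replicate] at hj
  rcases hj with ((⟨_,h⟩|⟨_,h⟩)|⟨_,h⟩)|⟨_,h⟩ <;> omega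

lemma notmem4 (x b c d : ℕ) :
    4 ∉ replicate x 3 + replicate b 5 + replicate c 6 + replicate d 7 := by
  simp [mem_replicate]


end Stmt14

theorem stmt_14 (N : ℕ) (hN : 1042 ≤ N) :
    Nat.card {p : Nat.Partition N //
        p.parts ≠ 0 ∧ ∀ j ∈ p.parts, 4 ≤ j ∧ j ≤ 7} ≤
      Nat.card {p : Nat.Partition N //
        3 ∈ p.parts ∧ (∀ j ∈ p.parts, 3 ≤ j ∧ j ≤ 7) ∧ 4 ∉ p.parts} := by
  open Stmt14 Multiset in
  classical
  have hsum : ∀ p : Nat.Partition N, (∀ j ∈ p.parts, 4 ≤ j ∧ j ≤ 7) →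
      4*(count 4 p.parts)+5*(count 5 p.parts)+6*(count 6 p.parts)+7*(count 7 p.parts) = N := by
    intro p hp
    conv_rhs => rw [← p.parts_sum]
    conv_rhs => rw [decomp p.parts hp]
    simp [Multiset.sum_replicate, smul_eq_mul]; ring
  -- the injection
  set F : {p : Nat.Partition N // p.parts ≠ 0 ∧ ∀ j ∈ p.parts, 4 ≤ j ∧ j ≤ 7} →
      {p : Nat.Partition N // 3 ∈ p.parts ∧ (∀ j ∈ p.parts, 3 ≤ j ∧ j ≤ 7) ∧ 4 ∉ p.parts} :=
    fun pp =>
      let a := count 4 pp.1.parts; let b := count 5 pp.1.parts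
      let c := count 6 pp.1.parts; let d := count 7 pp.1.parts
      let q := fmap N a b c d
      have hk := key N a b c d q.1 q.2.1 q.2.2.1 q.2.2.2 hN (hsum pp.1 pp.2.2) rfl
      ⟨mk3 N q.1 q.2.1 q.2.2.1 q.2.2.2 hk.2.1, mem3 hk.1, bound3 _ _ _ _, notmem4 _ _ _ _⟩
      with hF
  apply Nat.card_le_card_of_injective F
  intro p1 p2 hF12
  have hparts : (F p1).1.parts = (F p2).1.parts := by rw [hF12]
  obtain ⟨q1, hq1⟩ : ∃ q, fmap N (count 4 p1.1.parts) (count 5 p1.1.parts)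
      (count 6 p1.1.parts) (count 7 p1.1.parts) = q := ⟨_, rfl⟩
  obtain ⟨q2, hq2⟩ : ∃ q, fmap N (count 4 p2.1.parts) (count 5 p2.1.parts)
      (count 6 p2.1.parts) (count 7 p2.1.parts) = q := ⟨_, rfl⟩
  have h1 : (F p1).1.parts = replicate q1.1 3 + replicate q1.2.1 5 +
      replicate q1.2.2.1 6 + replicate q1.2.2.2 7 := by
    simp only [hF, mk3, hq1]
  have h2 : (F p2).1.parts = replicate q2.1 3 + replicate q2.2.1 5 +
      replicate q2.2.2.1 6 + replicate q2.2.2.2 7 := by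
    simp only [hF, mk3, hq2]
  have hq : q1 = q2 := by
    have := hparts
    rw [h1, h2] at this
    obtain ⟨e3, e5, e6, e7⟩ := counts_mk q1.1 q1.2.1 q1.2.2.1 q1.2.2.2
    obtain ⟨f3, f5, f6, f7⟩ := counts_mk q2.1 q2.2.1 q2.2.2.1 q2.2.2.2
    have c3 := congrArg (count 3) this
    have c5 := congrArg (count 5) this
    have c6 := congrArg (count 6) this
    have c7 := congrArg (count 7) this
    rw [e3, f3] at c3; rw [e5, f5] at c5; rw [e6, f6] at c6; rw [e7, f7] at c7
    exact Prod.ext c3 (Prod.ext c5 (Prod.ext c6 c7))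
  have k1 := key N _ _ _ _ q1.1 q1.2.1 q1.2.2.1 q1.2.2.2 hN (hsum p1.1 p1.2.2) (by rw [hq1])
  have k2 := key N _ _ _ _ q2.1 q2.2.1 q2.2.2.1 q2.2.2.2 hN (hsum p2.1 p2.2.2) (by rw [hq2])
  have hcounts : (count 4 p1.1.parts, count 5 p1.1.parts, count 6 p1.1.parts, count 7 p1.1.parts)
      = (count 4 p2.1.parts, count 5 p2.1.parts, count 6 p2.1.parts, count 7 p2.1.parts) := by
    rw [← k1.2.2, ← k2.2.2, hq]
  simp only [Prod.mk.injEq] at hcounts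
  obtain ⟨e4, e5, e6, e7⟩ := hcounts
  apply Subtype.ext
  apply Nat.Partition.ext
  rw [decomp p1.1.parts p1.2.2, decomp p2.1.parts p2.2.2, e4, e5, e6, e7]
end

section
/- For L ≥ 22 and N ≥ 21, the number of partitions of N with smallest part 3, all parts at most L+3, and no part equal to L is strictly greater than the number of nonempty partitions of N with all parts in {4, 5, …, L+3}. -/
/-!
We inject the partitions on the left into those on the right, missing at least one. Let `P` have
all parts in `[4, L + 3]`. If `L ∈ P`, the block of its `t` parts equal to `L` is rewritten as
threes and one part in `{4, 5, 6}`; otherwise, if `L + 1 ∈ P`, one part `L + 1` is rewritten as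
threes and one part in `{8, 9, 10}`; otherwise the three smallest parts are lowered by one and a
part `3` is added (with ad hoc rules when `P` has at most two parts). The number of threes
tells the three rules apart: it is at least `(L - 4) / 3` for the first, `(L - 7) / 3 ≥ 5` for
the second and at most `4` for the third, and within each rule the image determines `P`. A
partition made of threes and one part `3`, `5`, `7` or `8` is not an image.
-/

open Multiset

namespace SmallestPartThree

theorem filter_ne_add_replicate_count {α : Type*} [DecidableEq α] (s : Multiset α) (a : α) :
    s.filter (· ≠ a) + replicate (s.count a) a = s := by
  conv_rhs => rw [← filter_add_not (· ≠ a) s]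
  simp only [ne_eq, not_not, filter_eq']

theorem sum_sort {α : Type*} [AddCommMonoid α] (s : Multiset α) (r : α → α → Prop)
    [DecidableRel r] [IsTrans α r] [Std.Antisymm r] [Std.Total r] : (s.sort r).sum = s.sum := by
  rw [← sum_coe, sort_eq]

theorem three_notMem_of_four_le {Q : Multiset ℕ} (hQ : ∀ j ∈ Q, 4 ≤ j) : 3 ∉ Q :=
  fun h => by have := hQ 3 h; omega

theorem eq_of_mul_sub_four_div_three_eq {t t' L : ℕ} (hL : 4 ≤ L) (ht : 0 < t) (ht' : 0 < t')
    (h : (t * L - 4) / 3 = (t' * L - 4) / 3) : t = t' := by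
  have hle {u v : ℕ} (huv : u < v) : u * L + L ≤ v * L := by
    simpa [add_one_mul] using Nat.mul_le_mul_right L huv
  have := Nat.le_mul_of_pos_left L ht
  have := Nat.le_mul_of_pos_left L ht'
  rcases lt_trichotomy t t' with hlt | heq | hlt
  · have := hle hlt; omega
  · exact heq
  · have := hle hlt; omega

def encodeBlock (w c : ℕ) (Q : Multiset ℕ) : Multiset ℕ :=
  replicate ((c - w) / 3) 3 + (w + (c - w) % 3) ::ₘ Q

section encodeBlock

variable {w c : ℕ} {Q : Multiset ℕ}

theorem count_three_encodeBlock (hw : 4 ≤ w) (hQ : 3 ∉ Q) :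
    (encodeBlock w c Q).count 3 = (c - w) / 3 := by
  rw [encodeBlock, count_add, count_replicate_self, count_cons_of_ne (by omega),
    count_eq_zero_of_notMem hQ, add_zero]

theorem sum_encodeBlock (h : w ≤ c) : (encodeBlock w c Q).sum = c + Q.sum := by
  rw [encodeBlock, sum_add, sum_replicate, sum_cons, smul_eq_mul]
  omega

theorem three_mem_encodeBlock (h : w + 3 ≤ c) : 3 ∈ encodeBlock w c Q :=
  mem_add.2 <| .inl <| mem_replicate.2 ⟨by omega, rfl⟩

theorem mem_encodeBlock {j : ℕ} (hj : j ∈ encodeBlock w c Q) :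
    j = 3 ∨ (w ≤ j ∧ j ≤ w + 2) ∨ j ∈ Q := by
  rcases mem_add.1 hj with h | h
  · exact .inl (eq_of_mem_replicate h)
  · rcases mem_cons.1 h with h | h
    · omega
    · exact .inr (.inr h)

theorem encodeBlock_left_cancel {Q' : Multiset ℕ}
    (h : encodeBlock w c Q = encodeBlock w c Q') : Q = Q' :=
  (cons_inj_right _).1 (add_left_cancel h)

theorem encodeBlock_eq_cons_replicate (hw : 4 ≤ w) (hQ : 3 ∉ Q) {r k : ℕ}
    (h : encodeBlock w c Q = r ::ₘ replicate k 3) : Q = 0 ∧ r = w + (c - w) % 3 := by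
  have hρ : w + (c - w) % 3 ∈ r ::ₘ replicate k 3 := by
    rw [← h]; exact mem_add.2 (.inr (mem_cons_self _ _))
  rcases mem_cons.1 hρ with hr | hr
  · have hk : (c - w) / 3 = k := by
      have := congrArg (count 3) h
      rwa [count_three_encodeBlock hw hQ, count_cons_of_ne (by omega),
        count_replicate_self] at this
    rw [encodeBlock, hk, ← hr, ← add_zero (replicate k 3), ← add_cons, add_zero] at h
    exact ⟨(cons_inj_right _).1 (add_left_cancel h), hr.symm⟩
  · exact absurd (eq_of_mem_replicate hr) (by omega)

end encodeBlock

/-- Meant for sorted lists, where the last case lowers the three smallest entries. -/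
def extractThree (L : ℕ) : List ℕ → List ℕ
  | [n] => if n = L + 3 then [L / 2, L - L / 2] else [n - 3]
  | [x, y] =>
    if x = L + 3 then [L + 1, L + 2]
    else if 6 ≤ x then [x - 3, y]
    -- the equal last two entries keep these apart from the images of four-part lists
    else [x - 1, 4 + y % 2, (y - 6 - y % 2) / 2, (y - 6 - y % 2) / 2]
  | a :: b :: c :: r => (a - 1) :: (b - 1) :: (c - 1) :: r
  | [] => []

section extractThree

variable {L : ℕ} {l : List ℕ}

theorem pairwise_extractThree (hs : l.Pairwise (· ≤ ·)) (hsum : 21 ≤ l.sum) :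
    (extractThree L l).Pairwise (· ≤ ·) := by
  match l with
  | [] => simp at hsum
  | [n] => simp only [extractThree]; split_ifs <;> simp; omega
  | [x, y] => simp only [extractThree]; split_ifs <;> simp at * <;> omega
  | a :: b :: c :: r =>
    simp only [extractThree, List.pairwise_cons, List.mem_cons] at hs ⊢
    obtain ⟨ha, hb, hc, hr⟩ := hs
    refine ⟨?_, ?_, fun x hx => (hc x hx).trans' (Nat.sub_le c 1), hr⟩
    · rintro x (rfl | rfl | hx)
      · have := ha b (by simp); omega
      · have := ha c (by simp); omega
      · have := ha x (by simp [hx]); omega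
    · rintro x (rfl | hx)
      · have := hb c (by simp); omega
      · have := hb x (by simp [hx]); omega

theorem sum_extractThree (hs : l.Pairwise (· ≤ ·)) (hl : ∀ a ∈ l, 4 ≤ a ∧ a ≤ L + 3)
    (hsum : 21 ≤ l.sum) : (extractThree L l).sum + 3 = l.sum := by
  match l with
  | [] => simp at hsum
  | [n] | [x, y] => simp only [extractThree]; split_ifs <;> simp at * <;> omega
  | a :: b :: c :: r => simp [extractThree] at *; omega

theorem mem_extractThree (hl : ∀ a ∈ l, 4 ≤ a ∧ a ≤ L + 3 ∧ a ≠ L ∧ a ≠ L + 1)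
    (hsum : 21 ≤ l.sum) {b : ℕ} (hb : b ∈ extractThree L l) :
    3 ≤ b ∧ b ≤ L + 3 ∧ b ≠ L := by
  match l with
  | [] => simp at hsum
  | [n] | [x, y] => simp only [extractThree] at hb; split_ifs at hb <;> simp at * <;> omega
  | a :: b :: c :: r =>
    simp only [extractThree, List.mem_cons] at hb
    simp only [List.mem_cons, forall_eq_or_imp] at hl
    rcases hb with rfl | rfl | rfl | hb <;> first | omega | have := hl.2.2.2 _ hb; omega

theorem count_three_extractThree_le (hl : ∀ a ∈ l, 4 ≤ a) :
    (extractThree L l).count 3 ≤ 3 := by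
  match l with
  | [] => simp [extractThree]
  | [n] | [x, y] =>
    simp only [extractThree]
    split_ifs <;> simp only [List.count_cons, List.count_nil, beq_iff_eq] <;> split_ifs <;> omega
  | a :: b :: c :: r =>
    have : r.count 3 = 0 := List.count_eq_zero.2 fun h => by have := hl 3 (by simp [h]); omega
    simp only [extractThree, List.count_cons, this]
    split_ifs <;> simp

theorem extractThree_injective {l' : List ℕ} (hs : l.Pairwise (· ≤ ·))
    (hs' : l'.Pairwise (· ≤ ·)) (hl : ∀ a ∈ l, 4 ≤ a ∧ a ≤ L + 3)
    (hl' : ∀ a ∈ l', 4 ≤ a ∧ a ≤ L + 3) (hsum : 21 ≤ l.sum) (hsum' : 21 ≤ l'.sum)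
    (h : extractThree L l = extractThree L l') : l = l' := by
  rcases l with _ | ⟨a, _ | ⟨b, _ | ⟨c, r⟩⟩⟩ <;>
  rcases l' with _ | ⟨a', _ | ⟨b', _ | ⟨c', r'⟩⟩⟩ <;>
  simp only [extractThree] at h <;>
  (try split_ifs at h) <;>
  simp at h hs hs' hl hl' hsum hsum' ⊢ <;>
  (try obtain ⟨_, _, _, rfl⟩ := h) <;>
  simp_all <;>
  omega

end extractThree

/-- The windows `{4, 5, 6}` and `{8, 9, 10}` are chosen so that the number of threes
separates the three cases (see `mem_iff_count_three_encode`). -/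
def encode (L : ℕ) (P : Multiset ℕ) : Multiset ℕ :=
  if L ∈ P then encodeBlock 4 (P.count L * L) (P.filter (· ≠ L))
  else if L + 1 ∈ P then encodeBlock 8 (L + 1) (P.erase (L + 1))
  else 3 ::ₘ (extractThree L P.sort : Multiset ℕ)

section encode

variable {L : ℕ} {P : Multiset ℕ}

theorem count_three_encode_of_mem (hP : ∀ j ∈ P, 4 ≤ j ∧ j ≤ L + 3) (h : L ∈ P) :
    (encode L P).count 3 = (P.count L * L - 4) / 3 := by
  rw [encode, if_pos h, count_three_encodeBlock le_rfl
    (three_notMem_of_four_le fun j hj => (hP j (mem_of_mem_filter hj)).1)]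

theorem count_three_encode_of_succ_mem (hP : ∀ j ∈ P, 4 ≤ j ∧ j ≤ L + 3) (h : L ∉ P)
    (h' : L + 1 ∈ P) : (encode L P).count 3 = (L + 1 - 8) / 3 := by
  rw [encode, if_neg h, if_pos h', count_three_encodeBlock (by norm_num)
    (three_notMem_of_four_le fun j hj => (hP j (mem_of_mem_erase hj)).1)]

theorem count_three_encode_le (hP : ∀ j ∈ P, 4 ≤ j ∧ j ≤ L + 3) (h : L ∉ P)
    (h' : L + 1 ∉ P) : (encode L P).count 3 ≤ 4 := by
  rw [encode, if_neg h, if_neg h', count_cons_self, coe_count]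
  have := count_three_extractThree_le (L := L) (l := P.sort)
    (by simpa using fun j hj => (hP j hj).1)
  omega

theorem mem_iff_count_three_encode (hL : 22 ≤ L) (hP : ∀ j ∈ P, 4 ≤ j ∧ j ≤ L + 3) :
    L ∈ P ↔ (L - 4) / 3 ≤ (encode L P).count 3 := by
  by_cases h : L ∈ P
  · have : L ≤ P.count L * L := Nat.le_mul_of_pos_left L (count_pos.2 h)
    refine iff_of_true h ?_
    rw [count_three_encode_of_mem hP h]
    omega
  refine iff_of_false h ?_
  by_cases h' : L + 1 ∈ P
  · rw [count_three_encode_of_succ_mem hP h h']; omega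
  · have := count_three_encode_le hP h h'; omega

theorem succ_mem_iff_count_three_encode (hL : 22 ≤ L) (hP : ∀ j ∈ P, 4 ≤ j ∧ j ≤ L + 3)
    (h : L ∉ P) : L + 1 ∈ P ↔ 5 ≤ (encode L P).count 3 := by
  by_cases h' : L + 1 ∈ P
  · exact iff_of_true h' (by rw [count_three_encode_of_succ_mem hP h h']; omega)
  · exact iff_of_false h' (by have := count_three_encode_le hP h h'; omega)

theorem sum_encode (hL : 22 ≤ L) (hP : ∀ j ∈ P, 4 ≤ j ∧ j ≤ L + 3)
    (hsum : 21 ≤ P.sum) : (encode L P).sum = P.sum := by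
  unfold encode
  split_ifs with h h'
  · have : L ≤ P.count L * L := Nat.le_mul_of_pos_left L (count_pos.2 h)
    have hP := congrArg sum (filter_ne_add_replicate_count P L)
    rw [sum_add, sum_replicate, smul_eq_mul] at hP
    rw [sum_encodeBlock (by omega)]
    omega
  · have hP := congrArg sum (cons_erase h')
    rw [sum_cons] at hP
    rw [sum_encodeBlock (by omega)]
    omega
  · rw [← sum_sort P (· ≤ ·)] at hsum ⊢
    have := sum_extractThree (L := L) (pairwise_sort _ _) (by simpa using hP) hsum
    rw [sum_cons, sum_coe]
    omega

theorem three_mem_encode (hL : 22 ≤ L) : 3 ∈ encode L P := by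
  unfold encode
  split_ifs with h h'
  · have : L ≤ P.count L * L := Nat.le_mul_of_pos_left L (count_pos.2 h)
    exact three_mem_encodeBlock (by omega)
  · exact three_mem_encodeBlock (by omega)
  · exact mem_cons_self _ _

theorem mem_encode (hL : 22 ≤ L) (hP : ∀ j ∈ P, 4 ≤ j ∧ j ≤ L + 3) (hsum : 21 ≤ P.sum)
    {j : ℕ} (hj : j ∈ encode L P) : 3 ≤ j ∧ j ≤ L + 3 ∧ j ≠ L := by
  unfold encode at hj
  split_ifs at hj with h h'
  · rcases mem_encodeBlock hj with rfl | hj | hj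
    · omega
    · omega
    · obtain ⟨hjP, hjL⟩ := mem_filter.1 hj
      have := hP j hjP
      omega
  · rcases mem_encodeBlock hj with rfl | hj | hj
    · omega
    · omega
    · have hjP := mem_of_mem_erase hj
      exact ⟨by have := hP j hjP; omega, (hP j hjP).2, fun hjL => h (hjL ▸ hjP)⟩
  · rcases mem_cons.1 hj with rfl | hj
    · omega
    · rw [← sum_sort P (· ≤ ·)] at hsum
      refine mem_extractThree (fun a ha => ?_) hsum (mem_coe.1 hj)
      have haP := (mem_sort (· ≤ ·)).1 ha
      exact ⟨(hP a haP).1, (hP a haP).2, fun e => h (e ▸ haP), fun e => h' (e ▸ haP)⟩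

theorem encode_injOn {P' : Multiset ℕ} (hL : 22 ≤ L) (hP : ∀ j ∈ P, 4 ≤ j ∧ j ≤ L + 3)
    (hP' : ∀ j ∈ P', 4 ≤ j ∧ j ≤ L + 3) (hsum : 21 ≤ P.sum) (hsum' : 21 ≤ P'.sum)
    (h : encode L P = encode L P') : P = P' := by
  have hc := congrArg (count 3) h
  have hT := (mem_iff_count_three_encode hL hP).trans
    (hc ▸ (mem_iff_count_three_encode hL hP').symm)
  by_cases hLP : L ∈ P
  · have hLP' := hT.1 hLP
    have ht : P.count L = P'.count L := by
      rw [count_three_encode_of_mem hP hLP, count_three_encode_of_mem hP' hLP'] at hc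
      exact eq_of_mul_sub_four_div_three_eq (by omega) (count_pos.2 hLP) (count_pos.2 hLP') hc
    rw [encode, if_pos hLP, encode, if_pos hLP', ht] at h
    rw [← filter_ne_add_replicate_count P L, ← filter_ne_add_replicate_count P' L,
      encodeBlock_left_cancel h, ht]
  have hLP' : L ∉ P' := hT.not.1 hLP
  have hU := (succ_mem_iff_count_three_encode hL hP hLP).trans
    (hc ▸ (succ_mem_iff_count_three_encode hL hP' hLP').symm)
  by_cases hUP : L + 1 ∈ P
  · have hUP' := hU.1 hUP
    rw [encode, if_neg hLP, if_pos hUP, encode, if_neg hLP', if_pos hUP'] at h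
    rw [← cons_erase hUP, ← cons_erase hUP', encodeBlock_left_cancel h]
  have hUP' : L + 1 ∉ P' := hU.not.1 hUP
  rw [encode, if_neg hLP, if_neg hUP, encode, if_neg hLP', if_neg hUP', cons_inj_right,
    coe_eq_coe] at h
  rw [← sum_sort P (· ≤ ·)] at hsum
  rw [← sum_sort P' (· ≤ ·)] at hsum'
  have hsort := extractThree_injective (pairwise_sort _ _) (pairwise_sort _ _)
    (by simpa using hP) (by simpa using hP') hsum hsum'
    (h.eq_of_pairwise' (pairwise_extractThree (pairwise_sort _ _) hsum)
      (pairwise_extractThree (pairwise_sort _ _) hsum'))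
  rw [← sort_eq P (· ≤ ·), hsort, sort_eq]

end encode

/-- Differs from the part `4 + (N - 4) % 3` when `L ∣ N` and from `8 + (N - 8) % 3` when
`N = L + 1`, the only lone non-three parts that `encode` can produce. -/
def witnessPart (L N : ℕ) : ℕ :=
  if N % 3 = 0 then 3 else if N % 3 = 1 then 7 else if N = L + 1 then 5 else 8

def witness (L N : ℕ) : Multiset ℕ :=
  witnessPart L N ::ₘ replicate ((N - witnessPart L N) / 3) 3

section witness

variable {L N : ℕ}

theorem witnessPart_spec :
    3 ≤ witnessPart L N ∧ witnessPart L N ≤ 8 ∧ witnessPart L N % 3 = N % 3 := by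
  unfold witnessPart; split_ifs <;> omega

theorem sum_witness (hN : 21 ≤ N) : (witness L N).sum = N := by
  have := witnessPart_spec (L := L) (N := N)
  rw [witness, sum_cons, sum_replicate, smul_eq_mul]
  omega

theorem mem_witness {j : ℕ} (hj : j ∈ witness L N) : 3 ≤ j ∧ j ≤ 8 := by
  have := witnessPart_spec (L := L) (N := N)
  rcases mem_cons.1 hj with rfl | hj
  · omega
  · rw [eq_of_mem_replicate hj]; omega

theorem three_mem_witness (hN : 21 ≤ N) : 3 ∈ witness L N := by
  have := witnessPart_spec (L := L) (N := N)
  exact mem_cons_of_mem (mem_replicate.2 ⟨by omega, rfl⟩)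

theorem five_le_count_three_witness (hN : 21 ≤ N) : 5 ≤ (witness L N).count 3 := by
  have := witnessPart_spec (L := L) (N := N)
  rw [witness, count_cons, count_replicate_self]
  omega

theorem encode_ne_witness {P : Multiset ℕ} (hL : 22 ≤ L)
    (hP : ∀ j ∈ P, 4 ≤ j ∧ j ≤ L + 3) (hsum : P.sum = N) (hN : 21 ≤ N) :
    encode L P ≠ witness L N := by
  intro h
  have hs := sum_encode hL hP (hN.trans_eq hsum.symm)
  by_cases hLP : L ∈ P
  · rw [encode, if_pos hLP] at h hs
    obtain ⟨hQ, hr⟩ := encodeBlock_eq_cons_replicate le_rfl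
      (three_notMem_of_four_le fun j hj => (hP j (mem_of_mem_filter hj)).1) h
    have : L ≤ P.count L * L := Nat.le_mul_of_pos_left L (count_pos.2 hLP)
    rw [hQ, sum_encodeBlock (by omega), sum_zero, add_zero, hsum] at hs
    have hLN : N ≠ L + 1 := fun e => by
      have : L ∣ L + 1 := e ▸ hs ▸ dvd_mul_left L _
      have := Nat.le_of_dvd one_pos ((Nat.dvd_add_right dvd_rfl).1 this)
      omega
    unfold witnessPart at hr
    split_ifs at hr <;> omega
  by_cases hUP : L + 1 ∈ P
  · rw [encode, if_neg hLP, if_pos hUP] at h hs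
    obtain ⟨hQ, hr⟩ := encodeBlock_eq_cons_replicate (by norm_num)
      (three_notMem_of_four_le fun j hj => (hP j (mem_of_mem_erase hj)).1) h
    rw [hQ, sum_encodeBlock (by omega), sum_zero, add_zero, hsum] at hs
    unfold witnessPart at hr
    split_ifs at hr <;> omega
  · have := count_three_encode_le hP hLP hUP
    have := five_le_count_three_witness (L := L) hN
    rw [h] at *
    omega

end witness

theorem card_partition_lt_of_injOn {N : ℕ} {A B : N.Partition → Prop}
    (f : Multiset ℕ → Multiset ℕ)
    (hf : ∀ p, A p → ∃ q : N.Partition, q.parts = f p.parts ∧ B q)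
    (hinj : ∀ p q, A p → A q → f p.parts = f q.parts → p = q)
    (m : N.Partition) (hm : B m) (hfm : ∀ p, A p → f p.parts ≠ m.parts) :
    Nat.card {p // A p} < Nat.card {p // B p} := by
  classical
  choose g hgf hgB using hf
  let g' : {p // A p} → {p // B p} := fun p => ⟨g p.1 p.2, hgB p.1 p.2⟩
  have hg' : Function.Injective g' := fun p q hpq =>
    Subtype.ext (hinj p.1 q.1 p.2 q.2 (by rw [← hgf, ← hgf]; exact congrArg (·.1.parts) hpq))
  have hm' : ⟨m, hm⟩ ∉ Set.range g' :=
    fun ⟨p, hp⟩ => hfm p.1 p.2 (by rw [← hgf]; exact congrArg (·.1.parts) hp)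
  rw [Nat.card_eq_fintype_card, Nat.card_eq_fintype_card]
  exact Fintype.card_lt_of_injective_of_notMem g' hg' hm'

end SmallestPartThree

open SmallestPartThree

theorem stmt_16 (L N : ℕ) (hL : 22 ≤ L) (hN : 21 ≤ N) :
    Nat.card {p : Nat.Partition N //
        p.parts ≠ 0 ∧ ∀ j ∈ p.parts, 4 ≤ j ∧ j ≤ L + 3} <
      Nat.card {p : Nat.Partition N //
        3 ∈ p.parts ∧ (∀ j ∈ p.parts, 3 ≤ j ∧ j ≤ L + 3) ∧ L ∉ p.parts} := by
  have hvalid {M : Multiset ℕ} (hM : ∀ j ∈ M, 3 ≤ j ∧ j ≤ L + 3 ∧ j ≠ L) :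
      (∀ i ∈ M, 0 < i) ∧ (∀ j ∈ M, 3 ≤ j ∧ j ≤ L + 3) ∧ L ∉ M :=
    ⟨fun i hi => by have := hM i hi; omega, fun j hj => ⟨(hM j hj).1, (hM j hj).2.1⟩,
      fun hLM => (hM L hLM).2.2 rfl⟩
  obtain ⟨hwpos, hwle, hwL⟩ := hvalid fun j hj => by
    have := mem_witness (L := L) (N := N) hj; omega
  refine card_partition_lt_of_injOn (encode L) (fun p hp => ?_)
    (fun p q hp hq h => Nat.Partition.ext (encode_injOn hL hp.2 hq.2
      (hN.trans_eq p.parts_sum.symm) (hN.trans_eq q.parts_sum.symm) h))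
    ⟨witness L N, hwpos _, sum_witness hN⟩ ⟨three_mem_witness hN, hwle, hwL⟩
    (fun p hp => encode_ne_witness hL hp.2 p.parts_sum hN)
  have hsum : 21 ≤ p.parts.sum := hN.trans_eq p.parts_sum.symm
  obtain ⟨hpos, hle, hLp⟩ := hvalid fun j hj => mem_encode hL hp.2 hsum hj
  exact ⟨⟨encode L p.parts, hpos _, (sum_encode hL hp.2 hsum).trans p.parts_sum⟩, rfl,
    three_mem_encode hL, hle, hLp⟩
end

section
/- Let L ≥ N + 1 be positive integers with 1 ≤ N ≤ 20. Then the difference between the number of partitions of N with smallest part exactly 3 and the number of partitions of N with smallest part at least 4 does not depend on L when interpreted with the additional constraints 'all parts at most L+3 and no part equal to L' for the first count and 'all parts in {4,…,L+3}' for the second; moreover this difference is −1 if N ∈ {4, 5, 8, 10, 12, 14, 16} and is ≥ 0 otherwise. -/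
def genP : ℕ → ℕ → ℕ → Finset (Multiset ℕ)
  | 0, _, _ => {0}
  | f + 1, n, k =>
    if n = 0 then {0}
    else
      (Finset.Icc (max k 1) n).attach.biUnion fun i =>
        (genP f (n - i.1) i.1).image (fun s => i.1 ::ₘ s)

theorem mem_genP : ∀ (f n k : ℕ), n ≤ f → ∀ (s : Multiset ℕ),
    s ∈ genP f n k ↔ s.sum = n ∧ ∀ i ∈ s, max k 1 ≤ i := by
  intro f
  induction f with
  | zero =>
    intro n k hn s
    interval_cases n
    show s ∈ ({0} : Finset (Multiset ℕ)) ↔ _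
    simp only [Finset.mem_singleton]
    constructor
    · rintro rfl; simp
    · rintro ⟨hs, hmem⟩
      by_contra hne
      obtain ⟨a, ha⟩ := Multiset.exists_mem_of_ne_zero hne
      have h1 := hmem a ha
      have h2 := Multiset.le_sum_of_mem ha
      omega
  | succ f ih =>
    intro n k hn s
    show s ∈ (if n = 0 then {0} else _) ↔ _
    split_ifs with h
    · subst h
      simp only [Finset.mem_singleton]
      constructor
      · rintro rfl; simp
      · rintro ⟨hs, hmem⟩
        by_contra hne
        obtain ⟨a, ha⟩ := Multiset.exists_mem_of_ne_zero hne
        have h1 := hmem a ha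
        have h2 := Multiset.le_sum_of_mem ha
        omega
    · rw [Finset.mem_biUnion]
      constructor
      · rintro ⟨i, -, hmem⟩
        rw [Finset.mem_image] at hmem
        obtain ⟨t, ht, rfl⟩ := hmem
        have hi' := Finset.mem_Icc.1 i.2
        rw [ih _ _ (by omega)] at ht
        obtain ⟨ht1, ht2⟩ := ht
        refine ⟨?_, ?_⟩
        · rw [Multiset.sum_cons, ht1]; omega
        · intro j hj
          rcases Multiset.mem_cons.1 hj with rfl | hj
          · omega
          · have := ht2 j hj; omega
      · rintro ⟨rfl, hmem⟩
        have hne : s ≠ 0 := by rintro rfl; simp at h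
        obtain ⟨a, ha⟩ := Multiset.exists_mem_of_ne_zero hne
        have hfin : s.toFinset.Nonempty := ⟨a, Multiset.mem_toFinset.2 ha⟩
        set i := s.toFinset.min' hfin with hidef
        have his : i ∈ s := Multiset.mem_toFinset.1 (s.toFinset.min'_mem hfin)
        have hmin : ∀ j ∈ s, i ≤ j := fun j hj =>
          s.toFinset.min'_le j (Multiset.mem_toFinset.2 hj)
        have hik : max k 1 ≤ i := hmem i his
        have hin : i ≤ s.sum := Multiset.le_sum_of_mem his
        have key2 := ih (s.sum - i) i (by omega)
        refine ⟨⟨i, Finset.mem_Icc.2 ⟨hik, hin⟩⟩, Finset.mem_attach _ _, ?_⟩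
        rw [Finset.mem_image]
        refine ⟨s.erase i, ?_, Multiset.cons_erase his⟩
        show s.erase i ∈ genP f (s.sum - i) i
        rw [key2]
        constructor
        · have hsum : i + (s.erase i).sum = s.sum := by
            conv_rhs => rw [← Multiset.cons_erase his]
            rw [Multiset.sum_cons]
          omega
        · intro j hj
          have hj' : j ∈ s := Multiset.mem_of_mem_erase hj
          have := hmin j hj'
          omega

theorem card_partition_eq (N : ℕ) (Q : Multiset ℕ → Prop) [DecidablePred Q]
    (hQ : ∀ s, Q s → ∀ i ∈ s, 3 ≤ i) :
    Nat.card {p : Nat.Partition N // Q p.parts} = ((genP N N 3).filter Q).card := by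
  have key := mem_genP N N 3 le_rfl
  have e : {p : Nat.Partition N // Q p.parts} ≃ {s // s ∈ (genP N N 3).filter Q} :=
    { toFun := fun p => ⟨p.1.parts, by
        rw [Finset.mem_filter, key]
        exact ⟨⟨p.1.parts_sum, fun i hi => by have := hQ _ p.2 i hi; omega⟩, p.2⟩⟩
      invFun := fun s => ⟨⟨s.1, fun {i} hi => by
          have hs := Finset.mem_filter.1 s.2
          rw [key] at hs
          have := hs.1.2 i hi; omega, by
          have hs := Finset.mem_filter.1 s.2
          rw [key] at hs
          exact hs.1.1⟩, (Finset.mem_filter.1 s.2).2⟩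
      left_inv := fun p => by ext1; rfl
      right_inv := fun s => rfl }
  rw [Nat.card_congr e, Nat.card_eq_fintype_card, Fintype.card_coe]

theorem stmt_18 (L N : ℕ) (hN1 : 1 ≤ N) (hN20 : N ≤ 20) (hL : N + 1 ≤ L) :
    ((Nat.card {p : Nat.Partition N //
          3 ∈ p.parts ∧ (∀ j ∈ p.parts, 3 ≤ j ∧ j ≤ L + 3) ∧ L ∉ p.parts} : ℤ) -
        (Nat.card {p : Nat.Partition N // ∀ j ∈ p.parts, 4 ≤ j ∧ j ≤ L + 3} : ℤ) =
      (Nat.card {p : Nat.Partition N // 3 ∈ p.parts ∧ ∀ j ∈ p.parts, 3 ≤ j} : ℤ) -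
        (Nat.card {p : Nat.Partition N // ∀ j ∈ p.parts, 4 ≤ j} : ℤ)) ∧
    (N ∈ ({4, 5, 8, 10, 12, 14, 16} : Finset ℕ) →
      (Nat.card {p : Nat.Partition N //
          3 ∈ p.parts ∧ (∀ j ∈ p.parts, 3 ≤ j ∧ j ≤ L + 3) ∧ L ∉ p.parts} : ℤ) -
        (Nat.card {p : Nat.Partition N // ∀ j ∈ p.parts, 4 ≤ j ∧ j ≤ L + 3} : ℤ) = -1) ∧
    (N ∉ ({4, 5, 8, 10, 12, 14, 16} : Finset ℕ) →
      0 ≤ (Nat.card {p : Nat.Partition N //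
          3 ∈ p.parts ∧ (∀ j ∈ p.parts, 3 ≤ j ∧ j ≤ L + 3) ∧ L ∉ p.parts} : ℤ) -
        (Nat.card {p : Nat.Partition N // ∀ j ∈ p.parts, 4 ≤ j ∧ j ≤ L + 3} : ℤ)) := by
  have hbound : ∀ p : Nat.Partition N, ∀ j ∈ p.parts, j ≤ N := fun p j hj =>
    p.parts_sum ▸ Multiset.le_sum_of_mem hj
  have hA : Nat.card {p : Nat.Partition N //
        3 ∈ p.parts ∧ (∀ j ∈ p.parts, 3 ≤ j ∧ j ≤ L + 3) ∧ L ∉ p.parts}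
      = Nat.card {p : Nat.Partition N // 3 ∈ p.parts ∧ ∀ j ∈ p.parts, 3 ≤ j} := by
    apply Nat.card_congr (Equiv.subtypeEquivRight ?_)
    intro p
    constructor
    · rintro ⟨h3, hj, -⟩
      exact ⟨h3, fun j hj' => (hj j hj').1⟩
    · rintro ⟨h3, hj⟩
      exact ⟨h3, fun j hj' => ⟨hj j hj', by have := hbound p j hj'; omega⟩,
        fun hc => by have := hbound p L hc; omega⟩
  have hB : Nat.card {p : Nat.Partition N // ∀ j ∈ p.parts, 4 ≤ j ∧ j ≤ L + 3}
      = Nat.card {p : Nat.Partition N // ∀ j ∈ p.parts, 4 ≤ j} := by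
    apply Nat.card_congr (Equiv.subtypeEquivRight ?_)
    intro p
    constructor
    · exact fun hj j hj' => (hj j hj').1
    · exact fun hj j hj' => ⟨hj j hj', by have := hbound p j hj'; omega⟩
  rw [hA, hB,
    card_partition_eq N (fun s => 3 ∈ s ∧ ∀ j ∈ s, 3 ≤ j) (fun s h i hi => h.2 i hi),
    card_partition_eq N (fun s => ∀ j ∈ s, 4 ≤ j) (fun s h i hi => by have := h i hi; omega)]
  refine ⟨rfl, ?_, ?_⟩ <;>
    (intro hN; interval_cases N <;> revert hN <;> decide)
end
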